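/- arXiv:1009.3645 — 8 statements merged into one kernel-verified Lean document; each statement's English description precedes it below -/
import Mathlib

section
/- For every natural number n, the partition function satisfies p(n) = 1 + Σ_{k=1}^{n} f(k)·p(n−k). -/
open Multiset Finset

def sgnz (j : ℤ) : ℤ := if Even j then 1 else -1

lemma sgnz_add_one (j : ℤ) : sgnz (j + 1) = - sgnz j := by
  unfold sgnz
  rcases Int.even_or_odd j with h | h
  · simp [h, Int.even_add_one.2]
  · simp [Int.not_even_iff_odd.2 h, Int.even_add_one.2, h.add_one]

lemma sgnz_sub_one (j : ℤ) : sgnz (j - 1) = - sgnz j := by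
  have := sgnz_add_one (j - 1); rw [sub_add_cancel] at this; rw [this]; ring

lemma sgnz_ne_zero (j : ℤ) : sgnz j ≠ 0 := by unfold sgnz; split <;> simp

lemma sgnz_neg (j : ℤ) : sgnz (-j) = sgnz j := by unfold sgnz; simp

lemma sgnz_natCast (i : ℕ) : sgnz (i : ℤ) = (-1) ^ i := by
  unfold sgnz
  rcases Nat.even_or_odd i with h | h
  · simp [h, Int.even_coe_nat, h.neg_one_pow]
  · simp [Int.even_coe_nat, Nat.not_even_iff_odd.2 h, h.neg_one_pow]

/-- the Bressoud–Zeilberger involution -/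
def phi : ℤ × Multiset ℕ → ℤ × Multiset ℕ := fun a =>
  let j := a.1
  let M := a.2
  let l := M.sup
  let s := (M.erase l).card
  if (s : ℤ) + 3 * j + 1 ≤ (l : ℤ) then
    (j + 1, (M.erase l).map (· + 1) + Multiset.replicate ((l : ℤ) - s - 3 * j - 1).toNat 1)
  else
    (j - 1, (M.map (· - 1)).filter (· ≠ 0) +
      (if 0 < (M.card : ℤ) + 3 * j - 2 then {((M.card : ℤ) + 3 * j - 2).toNat} else 0))

def pvalid (n : ℕ) (a : ℤ × Multiset ℕ) : Prop :=
  (∀ x ∈ a.2, x ≠ 0) ∧ 2 * (a.2.sum : ℤ) + a.1 * (3 * a.1 - 1) = 2 * n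

instance (n : ℕ) (a : ℤ × Multiset ℕ) : Decidable (pvalid n a) := by
  unfold pvalid; infer_instance

lemma sup_mem_of_ne_zero {M : Multiset ℕ} (h : M ≠ 0) : M.sup ∈ M := by
  induction M using Multiset.induction with
  | empty => exact absurd rfl h
  | cons a s ih =>
    rw [Multiset.sup_cons]
    rcases eq_or_ne s 0 with rfl | hs
    · simp
    · rcases le_total a s.sup with h1 | h1
      · rw [sup_eq_right.2 h1]; exact Multiset.mem_cons_of_mem (ih hs)
      · rw [sup_eq_left.2 h1]; exact Multiset.mem_cons_self _ _

lemma sum_map_succ (M : Multiset ℕ) : (M.map (· + 1)).sum = M.sum + M.card := by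
  induction M using Multiset.induction with
  | empty => simp
  | cons a s ih => simp [ih]; ring

lemma mdec_eq {M : Multiset ℕ} (hpos : ∀ x ∈ M, x ≠ 0) :
    (M.map (· - 1)).filter (· ≠ 0) = (M.filter (· ≠ 1)).map (· - 1) := by
  rw [Multiset.filter_map]
  congr 1
  apply Multiset.filter_congr
  intro x hx
  have := hpos x hx
  simp only [Function.comp]
  constructor <;> intro h <;> omega

lemma mdec_map_succ {M : Multiset ℕ} (hpos : ∀ x ∈ M, x ≠ 0) :
    ((M.map (· - 1)).filter (· ≠ 0)).map (· + 1) = M.filter (· ≠ 1) := by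
  rw [mdec_eq hpos, Multiset.map_map]
  rw [Multiset.map_congr rfl (fun x hx => ?_), Multiset.map_id]
  have hx1 : x ∈ M := Multiset.mem_of_mem_filter hx
  have h1 := hpos x hx1
  have h2 : x ≠ 1 := by simpa using (Multiset.mem_filter.1 hx).2
  simp only [Function.comp, id]
  omega

lemma filter_one_eq_replicate (M : Multiset ℕ) :
    M.filter (· = 1) = Multiset.replicate (M.filter (· = 1)).card 1 := by
  rw [Multiset.eq_replicate_card]
  intro b hb
  simpa using (Multiset.mem_filter.1 hb).2

lemma filter_not_one (M : Multiset ℕ) :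
    M.filter (fun a => ¬ a ≠ 1) = M.filter (· = 1) := by
  apply Multiset.filter_congr; intro x _; constructor <;> intro h <;> omega

lemma card_split_one (M : Multiset ℕ) :
    M.card = (M.filter (· ≠ 1)).card + (M.filter (· = 1)).card := by
  conv_lhs => rw [← Multiset.filter_add_not (· ≠ 1) M]
  rw [Multiset.card_add, filter_not_one]

lemma mdec_card {M : Multiset ℕ} (hpos : ∀ x ∈ M, x ≠ 0) :
    ((M.map (· - 1)).filter (· ≠ 0)).card = (M.filter (· ≠ 1)).card := by
  rw [mdec_eq hpos, Multiset.card_map]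

lemma mdec_card_le {M : Multiset ℕ} (hpos : ∀ x ∈ M, x ≠ 0) :
    ((M.map (· - 1)).filter (· ≠ 0)).card ≤ M.card := by
  rw [mdec_card hpos]
  calc (M.filter (· ≠ 1)).card ≤ _ := Multiset.card_le_card (Multiset.filter_le _ _)

lemma mdec_reconstruct {M : Multiset ℕ} (hpos : ∀ x ∈ M, x ≠ 0) :
    ((M.map (· - 1)).filter (· ≠ 0)).map (· + 1) +
      Multiset.replicate (M.card - ((M.map (· - 1)).filter (· ≠ 0)).card) 1 = M := by
  rw [mdec_map_succ hpos, mdec_card hpos]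
  have h1 : M.card - (M.filter (· ≠ 1)).card = (M.filter (· = 1)).card := by
    rw [card_split_one M]; omega
  rw [h1, ← filter_one_eq_replicate]
  conv_rhs => rw [← Multiset.filter_add_not (· ≠ 1) M]
  rw [filter_not_one]

lemma mdec_sum {M : Multiset ℕ} (hpos : ∀ x ∈ M, x ≠ 0) :
    M.sum = ((M.map (· - 1)).filter (· ≠ 0)).sum + M.card := by
  conv_lhs => rw [← mdec_reconstruct hpos]
  rw [Multiset.sum_add, sum_map_succ, Multiset.sum_replicate, smul_eq_mul, mul_one,
    mdec_card hpos, card_split_one M]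
  omega

lemma phi_valid {n : ℕ} {j : ℤ} {M : Multiset ℕ} (hv : pvalid n (j, M)) (hn : 1 ≤ n) :
    pvalid n (phi (j, M)) := by
  obtain ⟨hpos, hsum⟩ := hv
  simp only at hpos hsum
  unfold phi
  simp only
  set l := M.sup with hl
  set E := M.erase l with hEdef
  set s := E.card with hsdef
  set t := M.card with htdef
  have hMsum : (M.sum : ℤ) = l + E.sum := by
    rcases eq_or_ne M 0 with hM | hM
    · rw [hEdef, hl, hM]; simp
    · have hME : M = l ::ₘ E := (Multiset.cons_erase (sup_mem_of_ne_zero hM)).symm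
      conv_lhs => rw [hME]
      rw [Multiset.sum_cons]
      push_cast
      ring
  by_cases hbr : (s : ℤ) + 3 * j + 1 ≤ (l : ℤ)
  · rw [if_pos hbr]
    have hc : (((l : ℤ) - s - 3 * j - 1).toNat : ℤ) = (l : ℤ) - s - 3 * j - 1 :=
      Int.toNat_of_nonneg (by linarith)
    constructor
    · intro x hx
      simp only [Multiset.mem_add, Multiset.mem_map] at hx
      rcases hx with ⟨y, _, rfl⟩ | hx
      · omega
      · rw [Multiset.eq_of_mem_replicate hx]; omega
    · simp only
      have hplain : ((E.map (· + 1)) + Multiset.replicate ((l : ℤ) - s - 3 * j - 1).toNat 1).sum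
          = E.sum + s + ((l : ℤ) - s - 3 * j - 1).toNat := by
        rw [Multiset.sum_add, sum_map_succ, Multiset.sum_replicate, smul_eq_mul, mul_one, hsdef]
      rw [hplain]
      push_cast [-Nat.cast_multiset_sum]
      rw [hc]
      linear_combination hsum - 2 * hMsum
  · rw [if_neg hbr]
    push_neg at hbr
    set D := (M.map (· - 1)).filter (· ≠ 0) with hDdef
    have hDsumNat : M.sum = D.sum + t := by rw [htdef, hDdef]; exact mdec_sum hpos
    have hDsum : (M.sum : ℤ) = (D.sum : ℤ) + t := by exact_mod_cast hDsumNat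
    have hposOut : ∀ x ∈ D + (if 0 < (t : ℤ) + 3 * j - 2 then {((t : ℤ) + 3 * j - 2).toNat} else 0),
        x ≠ 0 := by
      intro x hx
      rw [Multiset.mem_add] at hx
      rcases hx with hx | hx
      · exact (Multiset.mem_filter.1 hx).2
      · split at hx
        · rw [Multiset.mem_singleton] at hx
          subst hx
          omega
        · simp at hx
    refine ⟨hposOut, ?_⟩
    simp only
    by_cases hy : 0 < (t : ℤ) + 3 * j - 2
    · rw [if_pos hy]
      have hyn : ((((t : ℤ) + 3 * j - 2).toNat : ℕ) : ℤ) = (t : ℤ) + 3 * j - 2 :=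
        Int.toNat_of_nonneg (by linarith)
      have hplain : (D + {((t : ℤ) + 3 * j - 2).toNat}).sum
          = D.sum + ((t : ℤ) + 3 * j - 2).toNat := by
        rw [Multiset.sum_add, Multiset.sum_singleton]
      rw [hplain]
      push_cast [-Nat.cast_multiset_sum]
      rw [hyn]
      linear_combination hsum - 2 * hDsum
    · rw [if_neg hy]
      have hMne : M ≠ 0 := by
        intro h
        have hl0 : (l : ℤ) = 0 := by rw [hl, h]; simp
        have hs0 : (s : ℤ) = 0 := by rw [hsdef, hEdef, h]; simp
        have ht0 : (t : ℤ) = 0 := by rw [htdef, h]; simp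
        have hsum0 : (M.sum : ℤ) = 0 := by rw [h]; simp
        have hj : j = 0 := by omega
        rw [hj, hsum0] at hsum
        simp at hsum
        omega
      have ht1 : 1 ≤ t := by
        rw [htdef]
        exact Multiset.card_pos.2 hMne
      have hlsNat : s + 1 = t := by
        have : s = t - 1 := by
          rw [hsdef, hEdef, htdef, Multiset.card_erase_of_mem (sup_mem_of_ne_zero hMne)]
          rfl
        omega
      have hst : (s : ℤ) + 1 = (t : ℤ) := by exact_mod_cast hlsNat
      have hl1 : 1 ≤ l := by
        obtain ⟨x, hx⟩ := Multiset.exists_mem_of_ne_zero hMne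
        have h1 := hpos x hx
        have h2 := Multiset.le_sup hx
        rw [← hl] at h2
        omega
      have h2 : (t : ℤ) + 3 * j = 2 := by
        have hlle : (l : ℤ) ≤ (s : ℤ) + 3 * j := by omega
        have : (1 : ℤ) ≤ l := by exact_mod_cast hl1
        omega
      rw [Multiset.sum_add, Multiset.sum_zero, add_zero]
      linear_combination hsum - 2 * hDsum - 2 * h2

lemma phi_phi {n : ℕ} {j : ℤ} {M : Multiset ℕ} (hv : pvalid n (j, M)) (hn : 1 ≤ n) :
    phi (phi (j, M)) = (j, M) := by
  obtain ⟨hpos, hsum⟩ := hv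
  simp only at hpos hsum
  unfold phi
  simp only
  set l := M.sup with hl
  set E := M.erase l with hEdef
  set s := E.card with hsdef
  set t := M.card with htdef
  by_cases hbr : (s : ℤ) + 3 * j + 1 ≤ (l : ℤ)
  · rw [if_pos hbr]
    simp only
    set c := ((l : ℤ) - s - 3 * j - 1).toNat with hcdef
    have hc : (c : ℤ) = (l : ℤ) - s - 3 * j - 1 := Int.toNat_of_nonneg (by linarith)
    set M' := E.map (· + 1) + Multiset.replicate c 1 with hM'def
    have hcard' : M'.card = s + c := by
      rw [hM'def, Multiset.card_add, Multiset.card_map, Multiset.card_replicate, hsdef]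
    have hub : ∀ x ∈ M', x ≤ l + 1 := by
      intro x hx
      rw [hM'def, Multiset.mem_add] at hx
      rcases hx with hx | hx
      · obtain ⟨e, he, rfl⟩ := Multiset.mem_map.1 hx
        have := Multiset.le_sup (Multiset.mem_of_mem_erase (hEdef ▸ he))
        omega
      · rw [Multiset.eq_of_mem_replicate hx]; omega
    have hsup_le : M'.sup ≤ l + 1 := Multiset.sup_le.2 hub
    have hbr2 : ¬ (((M'.erase M'.sup).card : ℤ) + 3 * (j + 1) + 1 ≤ (M'.sup : ℤ)) := by
      rcases eq_or_ne M' 0 with hM0 | hM0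
      · have hsc : s + c = 0 := by rw [← hcard', hM0]; rfl
        have hs0 : s = 0 := by omega
        have hc0 : c = 0 := by omega
        have hj : 0 ≤ j := by
          rw [hc0, hs0] at hc
          push_cast at hc
          omega
        rw [hM0]
        simp
        omega
      · have hmem' := sup_mem_of_ne_zero hM0
        have hcarde : (M'.erase M'.sup).card = M'.card - 1 := by
          rw [Multiset.card_erase_of_mem hmem']; rfl
        have hcard1 : 1 ≤ M'.card := Multiset.card_pos.2 hM0
        have hsupz : (M'.sup : ℤ) ≤ (l : ℤ) + 1 := by exact_mod_cast hsup_le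
        intro hcon
        have h1 : ((M'.erase M'.sup).card : ℤ) = (M'.card : ℤ) - 1 := by
          rw [hcarde]
          push_cast [Nat.cast_sub hcard1]
          ring
        have h2 : (M'.card : ℤ) = s + c := by exact_mod_cast hcard'
        omega
    rw [if_neg hbr2]
    have hD' : ((M'.map (· - 1)).filter (· ≠ 0)) = E := by
      rw [hM'def, Multiset.map_add, Multiset.map_map, Multiset.map_replicate]
      have h1 : E.map ((· - 1) ∘ (· + 1)) = E := by
        have hcg : ∀ x ∈ E, ((· - 1) ∘ (· + 1)) x = id x := fun x _ => by simp
        rw [Multiset.map_congr rfl hcg, Multiset.map_id]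
      rw [h1, Multiset.filter_add]
      have h2 : E.filter (· ≠ 0) = E :=
        Multiset.filter_eq_self.2 (fun x hx => hpos x (Multiset.mem_of_mem_erase (hEdef ▸ hx)))
      have h3 : (Multiset.replicate c (1 - 1)).filter (· ≠ 0) = 0 := by
        apply Multiset.filter_eq_nil.2
        intro a ha
        rw [Multiset.eq_of_mem_replicate ha]
        simp
      rw [h2, h3, add_zero]
    have hfst : j + 1 - 1 = j := by ring
    rcases eq_or_ne M 0 with hM0 | hM0
    · have hl0 : l = 0 := by rw [hl, hM0]; rfl
      have hE0 : E = 0 := by rw [hEdef, hM0]; rfl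
      have hs0 : s = 0 := by rw [hsdef, hE0]; rfl
      have hcond : ¬ (0 < (M'.card : ℤ) + 3 * (j + 1) - 2) := by
        have h2 : (M'.card : ℤ) = s + c := by exact_mod_cast hcard'
        rw [hs0] at h2
        rw [hl0, hs0] at hc
        push_cast at h2 hc
        omega
      rw [if_neg hcond]
      rw [hD', hE0, hM0]
      simp [hfst]
    · have hl1 : 1 ≤ l := by
        obtain ⟨x, hx⟩ := Multiset.exists_mem_of_ne_zero hM0
        have h1 := hpos x hx
        have h2 := Multiset.le_sup hx
        rw [← hl] at h2
        omega
      have hval : (M'.card : ℤ) + 3 * (j + 1) - 2 = (l : ℤ) := by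
        have h2 : (M'.card : ℤ) = s + c := by exact_mod_cast hcard'
        omega
      have hcond : 0 < (M'.card : ℤ) + 3 * (j + 1) - 2 := by
        rw [hval]; exact_mod_cast hl1
      rw [if_pos hcond, hD', hval]
      rw [Int.toNat_natCast]
      rw [add_comm E {l}, Multiset.singleton_add]
      rw [hfst]
      rw [hEdef, Multiset.cons_erase (sup_mem_of_ne_zero hM0)]
  · rw [if_neg hbr]
    push_neg at hbr
    simp only
    set D := (M.map (· - 1)).filter (· ≠ 0) with hDdef
    have hmemD : ∀ x ∈ D, x ≠ 0 ∧ ∃ a ∈ M, a - 1 = x := by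
      intro x hx
      rw [hDdef, Multiset.mem_filter, Multiset.mem_map] at hx
      exact ⟨hx.2, hx.1⟩
    have hcardD : D.card ≤ t := by rw [htdef, hDdef]; exact mdec_card_le hpos
    by_cases hy : 0 < (t : ℤ) + 3 * j - 2
    · rw [if_pos hy]
      set yn := ((t : ℤ) + 3 * j - 2).toNat with hyndef
      have hyn : (yn : ℤ) = (t : ℤ) + 3 * j - 2 := Int.toNat_of_nonneg (by linarith)
      have hyn1 : 1 ≤ yn := by omega
      have hDle : ∀ x ∈ D, x ≤ yn := by
        intro x hx
        obtain ⟨hx0, a, haM, rfl⟩ := hmemD x hx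
        have hMne : M ≠ 0 := fun h => by rw [h] at haM; exact absurd haM (Multiset.notMem_zero a)
        have hal : a ≤ l := hl ▸ Multiset.le_sup haM
        have hst : s + 1 = t := by
          have : s = t - 1 := by
            rw [hsdef, hEdef, htdef, Multiset.card_erase_of_mem (sup_mem_of_ne_zero hMne)]
            rfl
          have ht1 : 1 ≤ t := htdef ▸ Multiset.card_pos.2 hMne
          omega
        have hstz : (s : ℤ) + 1 = (t : ℤ) := by exact_mod_cast hst
        have halz : (a : ℤ) ≤ (l : ℤ) := by exact_mod_cast hal
        have : (a : ℤ) ≤ (s : ℤ) + 3 * j := by omega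
        omega
      have hM'eq : D + {yn} = yn ::ₘ D := by
        rw [add_comm, Multiset.singleton_add]
      rw [hM'eq]
      have hsup' : (yn ::ₘ D).sup = yn := by
        rw [Multiset.sup_cons]
        exact sup_eq_left.2 (Multiset.sup_le.2 hDle)
      rw [hsup', Multiset.erase_cons_head]
      have hbr2 : ((D.card : ℤ) + 3 * (j - 1) + 1 ≤ (yn : ℤ)) := by
        have : (D.card : ℤ) ≤ (t : ℤ) := by exact_mod_cast hcardD
        omega
      rw [if_pos hbr2]
      have hcc : ((yn : ℤ) - D.card - 3 * (j - 1) - 1) = ((t - D.card : ℕ) : ℤ) := by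
        push_cast [Nat.cast_sub hcardD]
        omega
      rw [hcc, Int.toNat_natCast]
      have hfst : j - 1 + 1 = j := by ring
      rw [hfst]
      rw [hDdef, htdef]
      rw [mdec_reconstruct hpos]
    · rw [if_neg hy]
      have hMne : M ≠ 0 := by
        intro h
        have hl0 : (l : ℤ) = 0 := by rw [hl, h]; simp
        have hs0 : (s : ℤ) = 0 := by rw [hsdef, hEdef, h]; simp
        have ht0 : (t : ℤ) = 0 := by rw [htdef, h]; simp
        have hsum0 : (M.sum : ℤ) = 0 := by rw [h]; simp
        have hj : j = 0 := by omega
        rw [hj, hsum0] at hsum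
        simp at hsum
        omega
      have ht1 : 1 ≤ t := htdef ▸ Multiset.card_pos.2 hMne
      have hst : s + 1 = t := by
        have : s = t - 1 := by
          rw [hsdef, hEdef, htdef, Multiset.card_erase_of_mem (sup_mem_of_ne_zero hMne)]
          rfl
        omega
      have hstz : (s : ℤ) + 1 = (t : ℤ) := by exact_mod_cast hst
      have hl1 : 1 ≤ l := by
        obtain ⟨x, hx⟩ := Multiset.exists_mem_of_ne_zero hMne
        have h1 := hpos x hx
        have h2 := Multiset.le_sup hx
        rw [← hl] at h2
        omega
      have hlz1 : (l : ℤ) = 1 := by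
        have h1 : (1 : ℤ) ≤ l := by exact_mod_cast hl1
        omega
      have hl1' : l = 1 := by exact_mod_cast hlz1
      have hall1 : ∀ x ∈ M, x = 1 := by
        intro x hx
        have h1 := hpos x hx
        have h2 := hl ▸ Multiset.le_sup hx
        omega
      have hMrep : M = Multiset.replicate t 1 := by
        rw [htdef]
        exact (Multiset.eq_replicate_card).2 hall1
      have hD0 : D = 0 := by
        apply Multiset.eq_zero_of_forall_notMem
        intro x hx
        obtain ⟨hx0, a, haM, rfl⟩ := hmemD x hx
        have := hall1 a haM
        omega
      rw [hD0, add_zero]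
      have hsup0 : (0 : Multiset ℕ).sup = 0 := rfl
      rw [hsup0]
      have hbr2 : (((0 : Multiset ℕ).erase 0).card : ℤ) + 3 * (j - 1) + 1 ≤ ((0:ℕ) : ℤ) := by
        simp
        omega
      rw [if_pos hbr2]
      have ht2 : (t : ℤ) + 3 * j = 2 := by
        -- l = 1 ≤ s + 3j, so t + 3j ≥ 2; hy gives ≤ 2
        omega
      have hcc : (((0:ℕ) : ℤ) - (((0 : Multiset ℕ).erase 0).card : ℤ) - 3 * (j - 1) - 1) = (t : ℤ) := by
        simp
        omega
      rw [hcc, Int.toNat_natCast]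
      have hfst : j - 1 + 1 = j := by ring
      rw [hfst]
      simp [← hMrep]

lemma phi_fst (a : ℤ × Multiset ℕ) : (phi a).1 = a.1 + 1 ∨ (phi a).1 = a.1 - 1 := by
  unfold phi
  simp only
  split
  · left; rfl
  · right; rfl

lemma sgnz_phi_fst (a : ℤ × Multiset ℕ) : sgnz (phi a).1 = - sgnz a.1 := by
  rcases phi_fst a with h | h <;> rw [h]
  · exact sgnz_add_one a.1
  · exact sgnz_sub_one a.1

lemma phi_ne (a : ℤ × Multiset ℕ) : phi a ≠ a := by
  intro h
  rcases phi_fst a with h1 | h1 <;> rw [h] at h1 <;> omega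

def MM (n : ℕ) : Finset (Multiset ℕ) :=
  (Finset.range (n + 1)).biUnion
    (fun m => (Finset.univ : Finset (Nat.Partition m)).image (fun q => q.parts))

lemma mem_MM {n : ℕ} {M : Multiset ℕ} (hpos : ∀ x ∈ M, x ≠ 0) (hsum : M.sum ≤ n) :
    M ∈ MM n := by
  rw [MM, Finset.mem_biUnion]
  refine ⟨M.sum, Finset.mem_range.2 (by omega), Finset.mem_image.2
    ⟨⟨M, fun {i} hi => Nat.pos_of_ne_zero (hpos i hi), rfl⟩, Finset.mem_univ _, rfl⟩⟩

lemma pent_nonneg (j : ℤ) : 0 ≤ j * (3 * j - 1) := by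
  rcases le_or_gt j 0 with h | h
  · nlinarith
  · exact mul_nonneg (by linarith) (by linarith)

lemma valid_sum_le {n : ℕ} {a : ℤ × Multiset ℕ} (hv : pvalid n a) : a.2.sum ≤ n := by
  have h1 := hv.2
  have h2 := pent_nonneg a.1
  have : (a.2.sum : ℤ) ≤ n := by linarith
  exact_mod_cast this

lemma valid_j_bound {n : ℕ} {a : ℤ × Multiset ℕ} (hv : pvalid n a) :
    -(n : ℤ) ≤ a.1 ∧ a.1 ≤ (n : ℤ) := by
  set j := a.1
  have h1 := hv.2
  have hs : (0 : ℤ) ≤ (a.2.sum : ℤ) := by positivity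
  have hsq : j ^ 2 ≤ j * (3 * j - 1) := by
    have : 0 ≤ j * (2 * j - 1) := by
      rcases le_or_gt j 0 with h | h
      · nlinarith
      · exact mul_nonneg (by linarith) (by linarith)
    nlinarith
  have hb : j ^ 2 ≤ 2 * n := by linarith
  constructor
  · nlinarith [sq_nonneg (j + n)]
  · nlinarith [sq_nonneg (j - n)]

noncomputable def SB (n : ℕ) : Finset (ℤ × Multiset ℕ) :=
  ((Finset.Icc (-(n : ℤ)) (n : ℤ)) ×ˢ MM n).filter (fun a => pvalid n a)

lemma mem_SB_iff {n : ℕ} {a : ℤ × Multiset ℕ} : a ∈ SB n ↔ pvalid n a := by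
  rw [SB, Finset.mem_filter]
  constructor
  · exact fun h => h.2
  · intro hv
    refine ⟨Finset.mem_product.2 ⟨?_, mem_MM hv.1 (valid_sum_le hv)⟩, hv⟩
    rw [Finset.mem_Icc]
    exact valid_j_bound hv

theorem key_involution {n : ℕ} (hn : 1 ≤ n) : ∑ a ∈ SB n, sgnz a.1 = 0 := by
  apply Finset.sum_involution (fun a _ => phi a)
  · intro a _
    rw [sgnz_phi_fst a]
    ring
  · intro a _ _
    exact phi_ne a
  · intro a ha
    rw [mem_SB_iff] at ha ⊢
    have := phi_valid (j := a.1) (M := a.2) (by rwa [Prod.mk.eta]) hn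
    rwa [Prod.mk.eta] at this
  · intro a ha
    rw [mem_SB_iff] at ha
    have := phi_phi (j := a.1) (M := a.2) (by rwa [Prod.mk.eta]) hn
    rwa [Prod.mk.eta] at this

def e (n : ℕ) : ℤ :=
  ∑ k ∈ Finset.range (2 * n + 2),
    if 2 * n = 3 * k ^ 2 - k ∨ 2 * n = 3 * k ^ 2 + k then (-1) ^ (k + 1) else 0

def f (n : ℕ) : ℤ := ∑ k ∈ Finset.range (n + 1), e k

/-- The number of partitions of `n`: multisets of positive integers summing to `n`. -/
noncomputable def p (n : ℕ) : ℕ := Nat.card (Nat.Partition n)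

lemma p_eq_card (m : ℕ) : p m = (Finset.univ : Finset (Nat.Partition m)).card := by
  rw [p, Nat.card_eq_fintype_card, Finset.card_univ]

lemma p_pos (m : ℕ) : 0 < p m := by
  rw [p]
  exact Nat.card_pos

lemma card_valid {n : ℕ} {j : ℤ} {k : ℕ} (hk : k ≤ n) (hjk : j * (3 * j - 1) = 2 * k) :
    ((MM n).filter (fun M => pvalid n (j, M))).card = p (n - k) := by
  rw [p_eq_card]
  apply Finset.card_bij (fun M hM => (⟨M,
    fun {i} hi => Nat.pos_of_ne_zero ((Finset.mem_filter.1 hM).2.1 i hi), by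
      have hv := (Finset.mem_filter.1 hM).2.2
      simp only at hv
      have hkn : ((n - k : ℕ) : ℤ) = (n : ℤ) - k := by push_cast [Nat.cast_sub hk]; ring
      have : (M.sum : ℤ) = ((n - k : ℕ) : ℤ) := by rw [hkn]; linarith [hv]
      exact_mod_cast this⟩ : Nat.Partition (n - k)))
  · intro a ha
    exact Finset.mem_univ _
  · intro a₁ ha₁ a₂ ha₂ h
    exact congrArg Nat.Partition.parts h
  · intro q _
    have hq2 : q.parts.sum = n - k := q.parts_sum
    have hqpos : ∀ x ∈ q.parts, x ≠ 0 := fun x hx => Nat.pos_iff_ne_zero.mp (q.parts_pos hx)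
    have hval : pvalid n (j, q.parts) := by
      refine ⟨hqpos, ?_⟩
      simp only
      rw [hq2]
      push_cast [Nat.cast_sub hk]
      linarith
    have hmem : q.parts ∈ (MM n).filter (fun M => pvalid n (j, M)) :=
      Finset.mem_filter.2 ⟨mem_MM hqpos (by omega), hval⟩
    exact ⟨q.parts, hmem, Nat.Partition.ext rfl⟩

lemma sum_SB_decomp (n : ℕ) :
    ∑ a ∈ SB n, sgnz a.1 =
      ∑ j ∈ Finset.Icc (-(n : ℤ)) (n : ℤ),
        sgnz j * (((MM n).filter (fun M => pvalid n (j, M))).card : ℤ) := by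
  rw [SB, Finset.sum_filter, Finset.sum_product]
  refine Finset.sum_congr rfl fun j _ => ?_
  rw [← Finset.sum_filter]
  simp only
  rw [Finset.sum_const, nsmul_eq_mul, mul_comm]

lemma i_le_sq (i : ℕ) : (i : ℤ) ≤ (i : ℤ) ^ 2 := by
  have := Nat.le_self_pow two_ne_zero i
  exact_mod_cast this

lemma cast_pent1 {k i : ℕ} (h : 2 * k = 3 * i ^ 2 - i) :
    2 * (k : ℤ) = 3 * (i : ℤ) ^ 2 - i := by
  have hle : i ≤ 3 * i ^ 2 := by
    have := Nat.le_self_pow two_ne_zero i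
    omega
  zify [hle] at h
  exact_mod_cast h

lemma nat_pent1 {k i : ℕ} (h : 2 * (k : ℤ) = 3 * (i : ℤ) ^ 2 - i) :
    2 * k = 3 * i ^ 2 - i := by
  have hle : i ≤ 3 * i ^ 2 := by
    have := Nat.le_self_pow two_ne_zero i
    omega
  zify [hle]
  exact_mod_cast h

lemma pent1_le {k i : ℕ} (h : 2 * (k : ℤ) = 3 * (i : ℤ) ^ 2 - i) : i ≤ k := by
  have h2 := i_le_sq i
  have : (i : ℤ) ≤ k := by linarith
  exact_mod_cast this

lemma pent2_le {k i : ℕ} (h : 2 * (k : ℤ) = 3 * (i : ℤ) ^ 2 + i) : i ≤ k := by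
  have h2 := i_le_sq i
  have : (i : ℤ) ≤ k := by linarith
  exact_mod_cast this

lemma bridge (n : ℕ) :
    ∑ k ∈ Finset.range (n + 1), e k * (p (n - k) : ℤ) =
      - ∑ j ∈ Finset.Icc (-(n : ℤ)) (n : ℤ),
          sgnz j * (((MM n).filter (fun M => pvalid n (j, M))).card : ℤ) := by
  have step1 : ∀ k, e k * (p (n - k) : ℤ) = ∑ i ∈ Finset.range (2 * k + 2),
      (if 2 * k = 3 * i ^ 2 - i ∨ 2 * k = 3 * i ^ 2 + i
        then (-1) ^ (i + 1) * (p (n - k) : ℤ) else 0) := by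
    intro k
    rw [e, Finset.sum_mul]
    refine Finset.sum_congr rfl fun i _ => ?_
    rw [ite_mul, zero_mul]
  rw [Finset.sum_congr rfl (fun k _ => step1 k), Finset.sum_sigma']
  rw [← Finset.sum_neg_distrib]
  apply Finset.sum_bij_ne_zero
    (i := fun x _ _ => if 2 * x.1 = 3 * x.2 ^ 2 - x.2 then (x.2 : ℤ) else -(x.2 : ℤ))
  -- membership
  · rintro ⟨k, i⟩ h₁ h₂
    dsimp only at h₂ ⊢
    simp only [Finset.mem_sigma, Finset.mem_range] at h₁
    have hcond : 2 * k = 3 * i ^ 2 - i ∨ 2 * k = 3 * i ^ 2 + i := by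
      by_contra hc
      rw [if_neg hc] at h₂
      exact h₂ rfl
    rw [Finset.mem_Icc]
    split
    · next hx =>
      have hik := pent1_le (cast_pent1 hx)
      constructor
      · have : (0 : ℤ) ≤ i := by positivity
        omega
      · have : i ≤ n := by omega
        exact_mod_cast this
    · next hx =>
      have h2 : 2 * k = 3 * i ^ 2 + i := hcond.resolve_left hx
      have hik := pent2_le (by exact_mod_cast h2)
      have hin : (i : ℤ) ≤ n := by exact_mod_cast (by omega : i ≤ n)
      constructor <;> omega
  -- injectivity
  · rintro ⟨k₁, i₁⟩ h₁₁ h₁₂ ⟨k₂, i₂⟩ h₂₁ h₂₂ heq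
    dsimp only at h₁₂ h₂₂
    have hcond1 : 2 * k₁ = 3 * i₁ ^ 2 - i₁ ∨ 2 * k₁ = 3 * i₁ ^ 2 + i₁ := by
      by_contra hc; rw [if_neg hc] at h₁₂; exact h₁₂ rfl
    have hcond2 : 2 * k₂ = 3 * i₂ ^ 2 - i₂ ∨ 2 * k₂ = 3 * i₂ ^ 2 + i₂ := by
      by_contra hc; rw [if_neg hc] at h₂₂; exact h₂₂ rfl
    dsimp only at heq
    have hii : i₁ = i₂ ∧ k₁ = k₂ := by
      split at heq <;> split at heq
      · next ha hb =>
        have : i₁ = i₂ := by exact_mod_cast heq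
        subst this
        have := (cast_pent1 ha).trans (cast_pent1 hb).symm
        exact ⟨rfl, by omega⟩
      · next ha hb =>
        have h0 : (i₁ : ℤ) = -(i₂ : ℤ) := heq
        have hi1 : i₁ = 0 ∧ i₂ = 0 := by
          constructor <;> omega
        obtain ⟨hz1, hz2⟩ := hi1
        subst hz1; subst hz2
        have hb2 : 2 * k₂ = 3 * 0 ^ 2 + 0 := hcond2.resolve_left hb
        refine ⟨rfl, by omega⟩
      · next ha hb =>
        have h0 : -(i₁ : ℤ) = (i₂ : ℤ) := heq
        have hi1 : i₁ = 0 ∧ i₂ = 0 := by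
          constructor <;> omega
        obtain ⟨hz1, hz2⟩ := hi1
        subst hz1; subst hz2
        have ha2 : 2 * k₁ = 3 * 0 ^ 2 + 0 := hcond1.resolve_left ha
        refine ⟨rfl, by omega⟩
      · next ha hb =>
        have : i₁ = i₂ := by
          have h0 : -(i₁ : ℤ) = -(i₂ : ℤ) := heq
          have : (i₁ : ℤ) = i₂ := by omega
          exact_mod_cast this
        subst this
        have ha2 : 2 * k₁ = 3 * i₁ ^ 2 + i₁ := hcond1.resolve_left ha
        have hb2 : 2 * k₂ = 3 * i₁ ^ 2 + i₁ := hcond2.resolve_left hb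
        exact ⟨rfl, by omega⟩
    obtain ⟨hi, hk⟩ := hii
    subst hi; subst hk
    rfl
  -- surjectivity
  · intro j hj hgj
    have hcard : ((MM n).filter (fun M => pvalid n (j, M))).Nonempty := by
      rw [← Finset.card_pos]
      rcases Nat.eq_zero_or_pos ((MM n).filter (fun M => pvalid n (j, M))).card with h0 | h0
      · exfalso; apply hgj; rw [h0]; simp
      · exact h0
    obtain ⟨M, hM⟩ := hcard
    have hv : pvalid n (j, M) := (Finset.mem_filter.1 hM).2
    have hm : M.sum ≤ n := valid_sum_le hv
    set k := n - M.sum with hkdef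
    have hkn : k ≤ n := by omega
    have hkz : ((k : ℕ) : ℤ) = (n : ℤ) - M.sum := by
      rw [hkdef]; push_cast [Nat.cast_sub hm]; ring
    have h2k : j * (3 * j - 1) = 2 * k := by
      have := hv.2
      simp only at this
      rw [hkz]
      linarith
    rcases le_or_gt 0 j with hj0 | hj0
    · set i := j.toNat with hidef
      have hji : (i : ℤ) = j := Int.toNat_of_nonneg hj0
      have hzeq : 2 * (k : ℤ) = 3 * (i : ℤ) ^ 2 - i := by
        rw [hji]; linarith [h2k, sq_nonneg j, (by ring : j * (3 * j - 1) = 3 * j ^ 2 - j)]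
      have hcond1 : 2 * k = 3 * i ^ 2 - i := nat_pent1 hzeq
      have hik := pent1_le hzeq
      refine ⟨⟨k, i⟩, ?_, ?_, ?_⟩
      · exact Finset.mem_sigma.2 ⟨Finset.mem_range.2 (show k < n + 1 by omega),
          Finset.mem_range.2 (show i < 2 * k + 2 by omega)⟩
      · rw [if_pos (Or.inl hcond1)]
        exact mul_ne_zero (pow_ne_zero _ (by norm_num))
          (Nat.cast_ne_zero.2 (p_pos _).ne')
      · rw [if_pos hcond1]
        exact hji
    · set i := (-j).toNat with hidef
      have hji : (i : ℤ) = -j := Int.toNat_of_nonneg (by omega)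
      have hi1 : 1 ≤ i := by omega
      have hzeq : 2 * (k : ℤ) = 3 * (i : ℤ) ^ 2 + i := by
        rw [hji]; linarith [h2k, (by ring : j * (3 * j - 1) = 3 * j ^ 2 - j),
          (by ring : 3 * (-j) ^ 2 + -j = 3 * j ^ 2 - j)]
      have hcond2 : 2 * k = 3 * i ^ 2 + i := by exact_mod_cast hzeq
      have hik := pent2_le hzeq
      have hnot1 : ¬ (2 * k = 3 * i ^ 2 - i) := by
        intro hc
        have := cast_pent1 hc
        have : (i : ℤ) = 0 := by linarith
        omega
      refine ⟨⟨k, i⟩, ?_, ?_, ?_⟩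
      · exact Finset.mem_sigma.2 ⟨Finset.mem_range.2 (show k < n + 1 by omega),
          Finset.mem_range.2 (show i < 2 * k + 2 by omega)⟩
      · rw [if_pos (Or.inr hcond2)]
        exact mul_ne_zero (pow_ne_zero _ (by norm_num))
          (Nat.cast_ne_zero.2 (p_pos _).ne')
      · rw [if_neg hnot1]
        exact (show -(i : ℤ) = j by omega)
  -- values agree
  · rintro ⟨k, i⟩ h₁ h₂
    dsimp only at h₂ ⊢
    simp only [Finset.mem_sigma, Finset.mem_range] at h₁
    have hcond : 2 * k = 3 * i ^ 2 - i ∨ 2 * k = 3 * i ^ 2 + i := by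
      by_contra hc
      rw [if_neg hc] at h₂
      exact h₂ rfl
    rw [if_pos hcond]
    split
    · next hx =>
      have hzeq := cast_pent1 hx
      have hkn : k ≤ n := by
        have := pent1_le hzeq; omega
      have hjk : (i : ℤ) * (3 * (i : ℤ) - 1) = 2 * k := by linarith [hzeq, (by ring :
        (i : ℤ) * (3 * (i : ℤ) - 1) = 3 * (i : ℤ) ^ 2 - i)]
      rw [card_valid hkn hjk, sgnz_natCast, pow_succ]
      ring
    · next hx =>
      have h2 : 2 * k = 3 * i ^ 2 + i := hcond.resolve_left hx
      have hzeq : 2 * (k : ℤ) = 3 * (i : ℤ) ^ 2 + i := by exact_mod_cast h2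
      have hkn : k ≤ n := by
        have := pent2_le hzeq; omega
      have hjk : (-(i : ℤ)) * (3 * (-(i : ℤ)) - 1) = 2 * k := by linarith [hzeq, (by ring :
        (-(i : ℤ)) * (3 * (-(i : ℤ)) - 1) = 3 * (i : ℤ) ^ 2 + i)]
      rw [card_valid hkn hjk, sgnz_neg, sgnz_natCast, pow_succ]
      ring

lemma euler_rec {n : ℕ} (hn : 1 ≤ n) :
    ∑ k ∈ Finset.range (n + 1), e k * (p (n - k) : ℤ) = 0 := by
  rw [bridge n, ← sum_SB_decomp n, key_involution hn, neg_zero]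

lemma e_zero : e 0 = -1 := by
  norm_num [e, Finset.sum_range_succ]

lemma p_zero : p 0 = 1 := by
  rw [p]
  exact Nat.card_unique

lemma euler_rec_zero : ∑ k ∈ Finset.range (0 + 1), e k * (p (0 - k) : ℤ) = -1 := by
  rw [Finset.sum_range_one, e_zero]
  norm_num [p_zero]

lemma F_swap (n : ℕ) :
    ∑ k ∈ Finset.range (n + 1), f k * (p (n - k) : ℤ) =
      ∑ m ∈ Finset.range (n + 1), ∑ i ∈ Finset.range (m + 1), e i * (p (m - i) : ℤ) := by
  have step1 : ∀ k, f k * (p (n - k) : ℤ) =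
      ∑ i ∈ Finset.range (k + 1), e i * (p (n - k) : ℤ) := by
    intro k
    rw [f, Finset.sum_mul]
  rw [Finset.sum_congr rfl fun k _ => step1 k, Finset.sum_sigma']
  conv_rhs => rw [Finset.sum_sigma']
  apply Finset.sum_nbij' (i := fun x => (⟨n - x.1 + x.2, x.2⟩ : Σ _ : ℕ, ℕ))
    (j := fun y => (⟨n - y.1 + y.2, y.2⟩ : Σ _ : ℕ, ℕ))
  · rintro ⟨k, i⟩ hx
    simp only [Finset.mem_sigma, Finset.mem_range] at hx
    exact Finset.mem_sigma.2 ⟨Finset.mem_range.2 (show n - k + i < n + 1 by omega),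
      Finset.mem_range.2 (show i < n - k + i + 1 by omega)⟩
  · rintro ⟨m, i⟩ hy
    simp only [Finset.mem_sigma, Finset.mem_range] at hy
    exact Finset.mem_sigma.2 ⟨Finset.mem_range.2 (show n - m + i < n + 1 by omega),
      Finset.mem_range.2 (show i < n - m + i + 1 by omega)⟩
  · rintro ⟨k, i⟩ hx
    simp only [Finset.mem_sigma, Finset.mem_range] at hx
    exact congrArg (fun m => (⟨m, i⟩ : Σ _ : ℕ, ℕ)) (show n - (n - k + i) + i = k by omega)
  · rintro ⟨m, i⟩ hy
    simp only [Finset.mem_sigma, Finset.mem_range] at hy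
    exact congrArg (fun m' => (⟨m', i⟩ : Σ _ : ℕ, ℕ)) (show n - (n - m + i) + i = m by omega)
  · rintro ⟨k, i⟩ hx
    simp only [Finset.mem_sigma, Finset.mem_range] at hx
    have : n - k + i - i = n - k := by omega
    rw [this]

lemma F_eq (n : ℕ) :
    ∑ k ∈ Finset.range (n + 1), f k * (p (n - k) : ℤ) = -1 := by
  rw [F_swap n, Finset.sum_range_succ']
  have h1 : ∀ i ∈ Finset.range n,
      ∑ j ∈ Finset.range (i + 1 + 1), e j * (p (i + 1 - j) : ℤ) = 0 :=
    fun i _ => euler_rec (by omega)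
  rw [Finset.sum_congr rfl h1, Finset.sum_const, smul_zero, zero_add, euler_rec_zero]

theorem integral_pentagonal_recurrence (n : ℕ) :
    (p n : ℤ) = 1 + ∑ k ∈ Finset.Icc 1 n, f k * p (n - k) := by
  have hins : Finset.range (n + 1) = insert 0 (Finset.Icc 1 n) := by
    ext x
    simp only [Finset.mem_range, Finset.mem_insert, Finset.mem_Icc]
    omega
  have h0 : (0 : ℕ) ∉ Finset.Icc 1 n := by simp
  have hF := F_eq n
  rw [hins, Finset.sum_insert h0] at hF
  have hf0 : f 0 = -1 := by rw [f, Finset.sum_range_one, e_zero]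
  rw [hf0] at hF
  simp only [Nat.sub_zero] at hF
  linarith
end

section
/- For every natural number j ≥ 1, f(j) = O₂(j) − E₂(j). -/
/-- Partitions of `j` into distinct parts, each at least 2, with an odd number of parts. -/
noncomputable def O2 (j : ℕ) : ℕ :=
  Nat.card {P : Nat.Partition j //
    P.parts.Nodup ∧ (∀ x ∈ P.parts, 2 ≤ x) ∧ Odd (Multiset.card P.parts)}
/-- Partitions of `j` into distinct parts, each at least 2, with an even number of parts. -/
noncomputable def E2 (j : ℕ) : ℕ :=
  Nat.card {P : Nat.Partition j //
    P.parts.Nodup ∧ (∀ x ∈ P.parts, 2 ≤ x) ∧ Even (Multiset.card P.parts)}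

open Finset

namespace PentAux

/-- sets of distinct parts ≥ 1 summing to n -/
def S (n : ℕ) : Finset (Finset ℕ) :=
  (Finset.Icc 1 n).powerset.filter (fun s => ∑ x ∈ s, x = n)

/-- sets of distinct parts ≥ 2 summing to n -/
def S2 (n : ℕ) : Finset (Finset ℕ) :=
  (Finset.Icc 2 n).powerset.filter (fun s => ∑ x ∈ s, x = n)

def T (n : ℕ) : ℤ := ∑ s ∈ S n, (-1) ^ s.card
def T2 (n : ℕ) : ℤ := ∑ s ∈ S2 n, (-1) ^ s.card

def Mx (s : Finset ℕ) : ℕ := s.sup id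
noncomputable def mx (s : Finset ℕ) : ℕ := sInf (s : Set ℕ)
def gx (s : Finset ℕ) : ℕ := ((Finset.range (Mx s)).filter (fun x => x ∉ s)).sup id

def Exc (s : Finset ℕ) : Prop :=
  ∃ k, 1 ≤ k ∧ (s = Finset.Icc k (2 * k - 1) ∨ s = Finset.Icc (k + 1) (2 * k))

noncomputable instance : DecidablePred Exc := Classical.decPred _

noncomputable def phi (s : Finset ℕ) : Finset ℕ :=
  if Mx s < gx s + mx s then
    insert (Mx s - gx s) (s.image fun x => if gx s < x then x - 1 else x)
  else
    (s.erase (mx s)).image fun x => if Mx s < x + mx s then x + 1 else x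

lemma mem_S {n : ℕ} {s : Finset ℕ} :
    s ∈ S n ↔ s ⊆ Finset.Icc 1 n ∧ ∑ x ∈ s, x = n := by
  simp [S, Finset.mem_filter, Finset.mem_powerset]

lemma mem_S2 {n : ℕ} {s : Finset ℕ} :
    s ∈ S2 n ↔ s ⊆ Finset.Icc 2 n ∧ ∑ x ∈ s, x = n := by
  simp [S2, Finset.mem_filter, Finset.mem_powerset]

lemma Mx_eq {s : Finset ℕ} {M : ℕ} (hM : M ∈ s) (h : ∀ x ∈ s, x ≤ M) : Mx s = M :=
  le_antisymm (Finset.sup_le h) (Finset.le_sup (f := id) hM)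

lemma mx_eq {s : Finset ℕ} {m : ℕ} (hm : m ∈ s) (h : ∀ x ∈ s, m ≤ x) : mx s = m :=
  le_antisymm (Nat.sInf_le hm) (le_csInf ⟨m, hm⟩ h)

lemma Mx_mem {s : Finset ℕ} (h : s.Nonempty) : Mx s ∈ s := by
  obtain ⟨b, hb, he⟩ := Finset.exists_mem_eq_sup s h id
  rw [Mx, he]; exact hb

lemma le_Mx {s : Finset ℕ} {x : ℕ} (h : x ∈ s) : x ≤ Mx s := Finset.le_sup (f := id) h

lemma mx_mem {s : Finset ℕ} (h : s.Nonempty) : mx s ∈ s := by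
  have : (s : Set ℕ).Nonempty := ⟨h.choose, h.choose_spec⟩
  exact Nat.sInf_mem this

lemma mx_le {s : Finset ℕ} {x : ℕ} (h : x ∈ s) : mx s ≤ x := Nat.sInf_le h

lemma gx_eq {s : Finset ℕ} {a : ℕ} (ha : a ∉ s) (haM : a < Mx s)
    (hrun : ∀ x, a < x → x ≤ Mx s → x ∈ s) : gx s = a := by
  apply le_antisymm
  · apply Finset.sup_le
    intro y hy
    simp only [Finset.mem_filter, Finset.mem_range] at hy
    show y ≤ a
    by_contra hya
    exact hy.2 (hrun y (by omega) (by omega))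
  · exact Finset.le_sup (f := id) (by simp [Finset.mem_filter, Finset.mem_range, ha, haM])

lemma gx_spec {s : Finset ℕ} (hne : s.Nonempty) (h0 : 0 ∉ s) :
    gx s ∉ s ∧ gx s < Mx s ∧ ∀ x, gx s < x → x ≤ Mx s → x ∈ s := by
  have hM : 1 ≤ Mx s := by
    have := Mx_mem hne
    rcases Nat.eq_zero_or_pos (Mx s) with h | h
    · exact absurd (h ▸ this) h0
    · exact h
  have hmem : gx s ∈ (Finset.range (Mx s)).filter (fun x => x ∉ s) := by
    have hne2 : ((Finset.range (Mx s)).filter (fun x => x ∉ s)).Nonempty :=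
      ⟨0, by simp only [Finset.mem_filter, Finset.mem_range]; exact ⟨hM, h0⟩⟩
    obtain ⟨b, hb, he⟩ := Finset.exists_mem_eq_sup _ hne2 id
    rw [gx, he]; exact hb
  simp only [Finset.mem_filter, Finset.mem_range] at hmem
  refine ⟨hmem.2, hmem.1, ?_⟩
  intro x hgx hxM
  by_contra hxs
  rcases eq_or_lt_of_le hxM with h | h
  · exact hxs (h ▸ Mx_mem hne)
  · have : x ≤ gx s := Finset.le_sup (f := id)
      (by simp [Finset.mem_filter, Finset.mem_range, hxs, h])
    omega


lemma Mx_Icc {a b : ℕ} (h : a ≤ b) : Mx (Finset.Icc a b) = b :=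
  Mx_eq (Finset.mem_Icc.2 ⟨h, le_rfl⟩) (fun x hx => (Finset.mem_Icc.1 hx).2)

lemma mx_Icc {a b : ℕ} (h : a ≤ b) : mx (Finset.Icc a b) = a :=
  mx_eq (Finset.mem_Icc.2 ⟨le_rfl, h⟩) (fun x hx => (Finset.mem_Icc.1 hx).1)

lemma gx_Icc {a b : ℕ} (h1 : 1 ≤ a) (h : a ≤ b) : gx (Finset.Icc a b) = a - 1 := by
  apply gx_eq
  · simp only [Finset.mem_Icc]; omega
  · rw [Mx_Icc h]; omega
  · intro x hx1 hx2
    rw [Mx_Icc h] at hx2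
    simp only [Finset.mem_Icc]; omega

lemma stepA {n : ℕ} {s : Finset ℕ} (hn : 1 ≤ n) (hs : s ∈ S n) (hex : ¬ Exc s)
    (hA : ¬ (Mx s < gx s + mx s)) :
    phi s ∈ S n ∧ ¬ Exc (phi s) ∧ (Mx (phi s) < gx (phi s) + mx (phi s)) ∧
      phi (phi s) = s ∧ (phi s).card + 1 = s.card := by
  obtain ⟨hsub, hsum⟩ := mem_S.1 hs
  have hbd : ∀ x ∈ s, 1 ≤ x ∧ x ≤ n := fun x hx => Finset.mem_Icc.1 (hsub hx)
  have hne : s.Nonempty := by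
    rcases Finset.eq_empty_or_nonempty s with h | h
    · exfalso; rw [h] at hsum; simp at hsum; omega
    · exact h
  have h0 : (0:ℕ) ∉ s := fun h => by have := (hbd 0 h).1; omega
  set M := Mx s with hMdef
  set g := gx s with hgdef
  set m := mx s with hmdef
  have hM : M ∈ s := Mx_mem hne
  have hMle : ∀ x ∈ s, x ≤ M := fun x hx => le_Mx hx
  have hm : m ∈ s := mx_mem hne
  have hmle : ∀ x ∈ s, m ≤ x := fun x hx => mx_le hx
  obtain ⟨hgs, hgM, hrun⟩ := gx_spec hne h0
  have h1m : 1 ≤ m := (hbd m hm).1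
  have hmM : m ≤ M := hMle m hm
  have hAle : g + m ≤ M := by omega
  -- not exceptional gives M ≥ 2m
  have h2m : m + m ≤ M := by
    by_contra hc
    have hseq : s = Finset.Icc m M := by
      apply Finset.Subset.antisymm
      · intro x hx; exact Finset.mem_Icc.2 ⟨hmle x hx, hMle x hx⟩
      · intro x hx
        rw [Finset.mem_Icc] at hx
        rcases eq_or_lt_of_le hx.1 with h | h
        · exact h ▸ hm
        · exact hrun x (by omega) hx.2
    have hgm : g = m - 1 := by rw [hgdef, hseq]; exact gx_Icc h1m hmM
    exact hex ⟨m, h1m, Or.inl (by rw [hseq]; congr 1; omega)⟩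
  set σ : ℕ → ℕ := fun x => if M < x + m then x + 1 else x with hσdef
  have hphi : phi s = (s.erase m).image σ := by
    rw [phi, if_neg hA]
  have hσinj : Function.Injective σ := by
    intro x y h
    simp only [hσdef] at h
    split_ifs at h <;> omega
  have hcard : ((s.erase m).image σ).card + 1 = s.card := by
    rw [Finset.card_image_of_injective _ hσinj, Finset.card_erase_of_mem hm]
    have : 1 ≤ s.card := Finset.card_pos.2 hne
    omega
  have hrunsub : ∀ x, M < x + m → x ≤ M → x ∈ s := by
    intro x h1 h2
    rcases eq_or_lt_of_le h2 with h | h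
    · exact h ▸ hM
    · exact hrun x (by omega) h2
  have hfilter : (s.erase m).filter (fun y => M < y + m) = Finset.Icc (M - m + 1) M := by
    ext x
    simp only [Finset.mem_filter, Finset.mem_erase, Finset.mem_Icc]
    constructor
    · rintro ⟨⟨hxm, hxs⟩, hMx⟩
      exact ⟨by omega, hMle x hxs⟩
    · rintro ⟨h1, h2⟩
      have hxs : x ∈ s := hrunsub x (by omega) h2
      exact ⟨⟨by omega, hxs⟩, by omega⟩
  have hsum_erase : m + ∑ x ∈ s.erase m, x = n := by
    have h := Finset.add_sum_erase s (fun x => x) hm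
    simpa [hsum] using h
  have hsum' : ∑ x ∈ (s.erase m).image σ, x = n := by
    rw [Finset.sum_image (fun a _ b _ h => hσinj h)]
    have hc : ∀ y ∈ s.erase m, σ y = y + (if M < y + m then 1 else 0) := by
      intro y hy; simp only [hσdef]; split_ifs <;> omega
    rw [Finset.sum_congr rfl hc, Finset.sum_add_distrib]
    have h2 : ∑ y ∈ s.erase m, (if M < y + m then 1 else 0)
        = ((s.erase m).filter (fun y => M < y + m)).card := by
      rw [Finset.sum_ite, Finset.sum_const, Finset.sum_const_zero, add_zero, smul_eq_mul, mul_one]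
    rw [h2, hfilter, Nat.card_Icc]
    omega
  -- M + 1 ≤ n
  have hMerase : M ∈ s.erase m := Finset.mem_erase.2 ⟨by omega, hM⟩
  have hMsum : M ≤ ∑ x ∈ s.erase m, x :=
    Finset.single_le_sum (f := fun x => x) (fun i _ => Nat.zero_le i) hMerase
  have hM1n : M + 1 ≤ n := by omega
  have hmem : (s.erase m).image σ ∈ S n := by
    rw [mem_S]
    refine ⟨?_, hsum'⟩
    intro z hz
    obtain ⟨y, hy, he⟩ := Finset.mem_image.1 hz
    have hys : y ∈ s := Finset.mem_of_mem_erase hy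
    have h1 := (hbd y hys).1
    have h2 := hMle y hys
    rw [Finset.mem_Icc]
    simp only [hσdef] at he
    split_ifs at he <;> omega
  -- structure of s'
  set s' := (s.erase m).image σ with hs'def
  have hM1mem : M + 1 ∈ s' := by
    rw [hs'def]
    apply Finset.mem_image.2
    exact ⟨M, hMerase, by simp only [hσdef]; rw [if_pos (by omega)]⟩
  have hle' : ∀ z ∈ s', z ≤ M + 1 := by
    intro z hz
    obtain ⟨y, hy, he⟩ := Finset.mem_image.1 hz
    have h2 := hMle y (Finset.mem_of_mem_erase hy)
    simp only [hσdef] at he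
    split_ifs at he <;> omega
  have hM' : Mx s' = M + 1 := Mx_eq hM1mem hle'
  have hK1 : ∀ z, M - m + 2 ≤ z → z ≤ M + 1 → z ∈ s' := by
    intro z h1 h2
    apply Finset.mem_image.2
    refine ⟨z - 1, Finset.mem_erase.2 ⟨by omega, hrunsub (z-1) (by omega) (by omega)⟩, ?_⟩
    simp only [hσdef]
    rw [if_pos (by omega)]
    omega
  have hK2 : M - m + 1 ∉ s' := by
    intro h
    obtain ⟨y, hy, he⟩ := Finset.mem_image.1 h
    simp only [hσdef] at he
    split_ifs at he <;> omega
  have hK3 : ∀ z ∈ s', m < z := by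
    intro z hz
    obtain ⟨y, hy, he⟩ := Finset.mem_image.1 hz
    obtain ⟨hym, hys⟩ := Finset.mem_erase.1 hy
    have := hmle y hys
    simp only [hσdef] at he
    split_ifs at he <;> omega
  have hg' : gx s' = M - m + 1 := by
    apply gx_eq hK2
    · rw [hM']; omega
    · intro x h1 h2
      rw [hM'] at h2
      exact hK1 x (by omega) h2
  have hne' : s'.Nonempty := ⟨M + 1, hM1mem⟩
  have hm'gt : m < mx s' := hK3 _ (mx_mem hne')
  have hdispatch : Mx s' < gx s' + mx s' := by rw [hM', hg']; omega
  have hnexc' : ¬ Exc s' := by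
    rintro ⟨k, hk, hcase | hcase⟩
    · have e1 : Mx s' = 2 * k - 1 := by rw [hcase]; exact Mx_Icc (by omega)
      have e2 : mx s' = k := by rw [hcase]; exact mx_Icc (by omega)
      have e3 : gx s' = k - 1 := by rw [hcase]; exact gx_Icc hk (by omega)
      rw [hM'] at e1; rw [hg'] at e3
      omega
    · have e1 : Mx s' = 2 * k := by rw [hcase]; exact Mx_Icc (by omega)
      have e3 : gx s' = k := by rw [hcase]; exact gx_Icc (by omega) (by omega)
      rw [hM'] at e1; rw [hg'] at e3
      omega
  have hinv : phi s' = s := by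
    rw [phi, if_pos hdispatch, hM', hg']
    have hrx : M + 1 - (M - m + 1) = m := by omega
    rw [hrx]
    have himg : (s'.image fun x => if M - m + 1 < x then x - 1 else x) = s.erase m := by
      rw [hs'def, Finset.image_image]
      have : ∀ y ∈ s.erase m, ((fun x => if M - m + 1 < x then x - 1 else x) ∘ σ) y = id y := by
        intro y hy
        have h2 := hMle y (Finset.mem_of_mem_erase hy)
        simp only [Function.comp, hσdef, id]
        split_ifs <;> omega
      rw [Finset.image_congr this, Finset.image_id]
    rw [himg, Finset.insert_erase hm]
  rw [hphi]
  exact ⟨hmem, hnexc', hdispatch, hinv, hcard⟩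

lemma stepB {n : ℕ} {s : Finset ℕ} (hn : 1 ≤ n) (hs : s ∈ S n) (hex : ¬ Exc s)
    (hB : Mx s < gx s + mx s) :
    phi s ∈ S n ∧ ¬ Exc (phi s) ∧ ¬ (Mx (phi s) < gx (phi s) + mx (phi s)) ∧
      phi (phi s) = s ∧ (phi s).card = s.card + 1 := by
  obtain ⟨hsub, hsum⟩ := mem_S.1 hs
  have hbd : ∀ x ∈ s, 1 ≤ x ∧ x ≤ n := fun x hx => Finset.mem_Icc.1 (hsub hx)
  have hne : s.Nonempty := by
    rcases Finset.eq_empty_or_nonempty s with h | h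
    · exfalso; rw [h] at hsum; simp at hsum; omega
    · exact h
  have h0 : (0:ℕ) ∉ s := fun h => by have := (hbd 0 h).1; omega
  set M := Mx s with hMdef
  set g := gx s with hgdef
  set m := mx s with hmdef
  have hM : M ∈ s := Mx_mem hne
  have hMle : ∀ x ∈ s, x ≤ M := fun x hx => le_Mx hx
  have hm : m ∈ s := mx_mem hne
  have hmle : ∀ x ∈ s, m ≤ x := fun x hx => mx_le hx
  obtain ⟨hgs, hgM, hrun⟩ := gx_spec hne h0
  have h1m : 1 ≤ m := (hbd m hm).1
  have hmM : m ≤ M := hMle m hm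
  have h1g : 1 ≤ g := by
    rcases Nat.eq_zero_or_pos g with h | h
    · exfalso; rw [h] at hB; simp at hB; omega
    · exact h
  have hg1s : g + 1 ∈ s := hrun (g+1) (by omega) (by omega)
  have hmg1 : m ≤ g + 1 := hmle _ hg1s
  -- not exceptional gives M - g < g
  have hB0 : M - g < g := by
    by_contra hc
    have hMeq : M = 2 * g ∧ m = g + 1 := by omega
    have hseq : s = Finset.Icc (g+1) M := by
      apply Finset.Subset.antisymm
      · intro x hx
        exact Finset.mem_Icc.2 ⟨by have := hmle x hx; omega, hMle x hx⟩
      · intro x hx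
        rw [Finset.mem_Icc] at hx
        exact hrun x (by omega) hx.2
    exact hex ⟨g, h1g, Or.inr (by rw [hseq]; congr 1; omega)⟩
  set σ : ℕ → ℕ := fun x => if g < x then x - 1 else x with hσdef
  set s' := insert (M - g) (s.image σ) with hs'def
  have hphi : phi s = s' := by rw [phi, if_pos hB]
  have hinj : ∀ x ∈ s, ∀ y ∈ s, σ x = σ y → x = y := by
    intro x hx y hy h
    have hxg : x ≠ g := by rintro rfl; exact hgs hx
    have hyg : y ≠ g := by rintro rfl; exact hgs hy
    simp only [hσdef] at h
    split_ifs at h <;> omega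
  have himg_gt : ∀ z ∈ s.image σ, M - g < z := by
    intro z hz
    obtain ⟨y, hy, he⟩ := Finset.mem_image.1 hz
    have h1 := hmle y hy
    have hyg : y ≠ g := by rintro rfl; exact hgs hy
    simp only [hσdef] at he
    split_ifs at he <;> omega
  have hnotmem : M - g ∉ s.image σ := fun h => lt_irrefl _ (himg_gt _ h)
  have hcard : s'.card = s.card + 1 := by
    rw [hs'def, Finset.card_insert_of_notMem hnotmem, Finset.card_image_of_injOn hinj]
  have hfilter : s.filter (fun y => g < y) = Finset.Icc (g + 1) M := by
    ext x
    simp only [Finset.mem_filter, Finset.mem_Icc]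
    constructor
    · rintro ⟨hxs, hgx⟩
      exact ⟨by omega, hMle x hxs⟩
    · rintro ⟨h1, h2⟩
      exact ⟨hrun x (by omega) h2, by omega⟩
  have hsumim : (∑ y ∈ s, σ y) + (M - g) = n := by
    have hc : ∀ y ∈ s, σ y + (if g < y then 1 else 0) = y := by
      intro y hy; simp only [hσdef]; split_ifs <;> omega
    have h2 : ∑ y ∈ s, (σ y + (if g < y then 1 else 0)) = n := by
      rw [Finset.sum_congr rfl hc, hsum]
    rw [Finset.sum_add_distrib] at h2
    have h3 : ∑ y ∈ s, (if g < y then 1 else 0) = (s.filter (fun y => g < y)).card := by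
      rw [Finset.sum_ite, Finset.sum_const, Finset.sum_const_zero, add_zero, smul_eq_mul, mul_one]
    rw [h3, hfilter, Nat.card_Icc] at h2
    omega
  have hsum' : ∑ x ∈ s', x = n := by
    rw [hs'def, Finset.sum_insert hnotmem, Finset.sum_image hinj]
    omega
  have hMn : M ≤ n := (hbd M hM).2
  have hmem : s' ∈ S n := by
    rw [mem_S]
    refine ⟨?_, hsum'⟩
    intro z hz
    rw [hs'def, Finset.mem_insert] at hz
    rw [Finset.mem_Icc]
    rcases hz with h | h
    · omega
    · obtain ⟨y, hy, he⟩ := Finset.mem_image.1 h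
      have h1 := (hbd y hy).1
      have h2 := (hbd y hy).2
      have h3 := hmle y hy
      simp only [hσdef] at he
      split_ifs at he <;> omega
  -- structure of s'
  have hMm1 : M - 1 ∈ s' := by
    rw [hs'def]
    apply Finset.mem_insert_of_mem
    apply Finset.mem_image.2
    exact ⟨M, hM, by simp only [hσdef]; rw [if_pos (by omega)]⟩
  have hle' : ∀ z ∈ s', z ≤ M - 1 := by
    intro z hz
    rw [hs'def, Finset.mem_insert] at hz
    rcases hz with h | h
    · omega
    · obtain ⟨y, hy, he⟩ := Finset.mem_image.1 h
      have h2 := hMle y hy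
      have hyg : y ≠ g := by rintro rfl; exact hgs hy
      simp only [hσdef] at he
      split_ifs at he <;> omega
  have hM' : Mx s' = M - 1 := Mx_eq hMm1 hle'
  have hL2 : ∀ z, g ≤ z → z ≤ M - 1 → z ∈ s' := by
    intro z h1 h2
    rw [hs'def]
    apply Finset.mem_insert_of_mem
    apply Finset.mem_image.2
    refine ⟨z + 1, hrun (z+1) (by omega) (by omega), ?_⟩
    simp only [hσdef]
    rw [if_pos (by omega)]
    omega
  have hmin' : ∀ z ∈ s', M - g ≤ z := by
    intro z hz
    rw [hs'def, Finset.mem_insert] at hz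
    rcases hz with h | h
    · omega
    · exact le_of_lt (himg_gt _ h)
  have hm' : mx s' = M - g := mx_eq (by rw [hs'def]; exact Finset.mem_insert_self _ _) hmin'
  have hne' : s'.Nonempty := ⟨M - g, by rw [hs'def]; exact Finset.mem_insert_self _ _⟩
  have h0' : (0:ℕ) ∉ s' := fun h => by have := hmin' 0 h; omega
  obtain ⟨hgs', hgM', hrun'⟩ := gx_spec hne' h0'
  have hgle' : gx s' + 1 ≤ g := by
    by_contra hc
    exact hgs' (hL2 (gx s') (by omega) (by rw [hM'] at hgM'; omega))
  have hdispatch : ¬ (Mx s' < gx s' + mx s') := by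
    rw [hM', hm']; omega
  have hnexc' : ¬ Exc s' := by
    rintro ⟨k, hk, hcase | hcase⟩
    · have e1 : Mx s' = 2 * k - 1 := by rw [hcase]; exact Mx_Icc (by omega)
      have e2 : mx s' = k := by rw [hcase]; exact mx_Icc (by omega)
      rw [hM'] at e1; rw [hm'] at e2
      omega
    · have e1 : Mx s' = 2 * k := by rw [hcase]; exact Mx_Icc (by omega)
      have e2 : mx s' = k + 1 := by rw [hcase]; exact mx_Icc (by omega)
      rw [hM'] at e1; rw [hm'] at e2
      omega
  have hinv : phi s' = s := by
    rw [phi, if_neg hdispatch, hm', hM']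
    have herase : s'.erase (M - g) = s.image σ := by
      rw [hs'def]; exact Finset.erase_insert hnotmem
    rw [herase, Finset.image_image]
    have hcongr : ∀ y ∈ s, ((fun x => if M - 1 < x + (M - g) then x + 1 else x) ∘ σ) y = id y := by
      intro y hy
      have h1 := hmle y hy
      have h2 := hMle y hy
      have hyg : y ≠ g := by rintro rfl; exact hgs hy
      simp only [Function.comp, hσdef, id]
      split_ifs <;> omega
    rw [Finset.image_congr hcongr, Finset.image_id]
  rw [hphi]
  exact ⟨hmem, hnexc', hdispatch, hinv, hcard⟩

lemma sum_nonexc_zero {n : ℕ} (hn : 1 ≤ n) :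
    ∑ s ∈ (S n).filter (fun s => ¬ Exc s), (-1 : ℤ) ^ s.card = 0 := by
  apply Finset.sum_involution (g := fun s _ => phi s)
  · intro s hs
    rw [Finset.mem_filter] at hs
    by_cases h : Mx s < gx s + mx s
    · obtain ⟨_, _, _, _, hc⟩ := stepB hn hs.1 hs.2 h
      rw [hc, pow_succ]; ring
    · obtain ⟨_, _, _, _, hc⟩ := stepA hn hs.1 hs.2 h
      rw [← hc, pow_succ]; ring
  · intro s hs _
    rw [Finset.mem_filter] at hs
    intro heq
    by_cases h : Mx s < gx s + mx s
    · obtain ⟨_, _, _, _, hc⟩ := stepB hn hs.1 hs.2 h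
      rw [heq] at hc; omega
    · obtain ⟨_, _, _, _, hc⟩ := stepA hn hs.1 hs.2 h
      rw [heq] at hc; omega
  · intro s hs
    rw [Finset.mem_filter] at hs ⊢
    by_cases h : Mx s < gx s + mx s
    · obtain ⟨h1, h2, _⟩ := stepB hn hs.1 hs.2 h
      exact ⟨h1, h2⟩
    · obtain ⟨h1, h2, _⟩ := stepA hn hs.1 hs.2 h
      exact ⟨h1, h2⟩
  · intro s hs
    rw [Finset.mem_filter] at hs
    by_cases h : Mx s < gx s + mx s
    · obtain ⟨_, _, _, h4, _⟩ := stepB hn hs.1 hs.2 h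
      exact h4
    · obtain ⟨_, _, _, h4, _⟩ := stepA hn hs.1 hs.2 h
      exact h4

lemma T_eq_exc {n : ℕ} (hn : 1 ≤ n) :
    T n = ∑ s ∈ (S n).filter Exc, (-1 : ℤ) ^ s.card := by
  rw [T, ← Finset.sum_filter_add_sum_filter_not (S n) Exc, sum_nonexc_zero hn, add_zero]

lemma gauss {a b : ℕ} (h : a ≤ b + 1) :
    2 * (∑ x ∈ Finset.Icc a b, x) + a * (a - 1) = (b + 1) * b := by
  have h1 : (∑ x ∈ Finset.Ico 0 a, x) + ∑ x ∈ Finset.Ico a (b+1), x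
      = ∑ x ∈ Finset.Ico 0 (b+1), x :=
    Finset.sum_Ico_consecutive _ (Nat.zero_le a) h
  rw [Finset.Ico_add_one_right_eq_Icc] at h1
  have h2 := Finset.sum_range_id_mul_two a
  have h3 := Finset.sum_range_id_mul_two (b+1)
  rw [Finset.range_eq_Ico] at h2 h3
  have hb : b + 1 - 1 = b := by omega
  rw [hb] at h3
  linarith

lemma int_factor_mm {k l : ℤ} (hk : 0 ≤ k) (hl : 0 ≤ l) (h : 3*k^2 - k = 3*l^2 - l) :
    k = l := by
  have h2 : (k - l) * (3*(k+l) - 1) = 0 := by linear_combination h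
  rcases mul_eq_zero.1 h2 with h3 | h3
  · omega
  · omega

lemma int_factor_pp {k l : ℤ} (hk : 0 ≤ k) (hl : 0 ≤ l) (h : 3*k^2 + k = 3*l^2 + l) :
    k = l := by
  have h2 : (k - l) * (3*(k+l) + 1) = 0 := by linear_combination h
  rcases mul_eq_zero.1 h2 with h3 | h3
  · omega
  · omega

lemma int_factor_mp {k l : ℤ} (hk : 0 ≤ k) (hl : 0 ≤ l) (h : 3*k^2 - k = 3*l^2 + l) :
    k = 0 ∧ l = 0 := by
  have h2 : (k + l) * (3*(k - l) - 1) = 0 := by linear_combination h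
  rcases mul_eq_zero.1 h2 with h3 | h3
  · omega
  · omega

lemma uniq_mm {n k l : ℕ} (h1 : 2*n + k = 3*k^2) (h2 : 2*n + l = 3*l^2) : k = l := by
  have h1' : 3*(k:ℤ)^2 - k = 2*(n:ℤ) := by zify at h1; linarith
  have h2' : 3*(l:ℤ)^2 - l = 2*(n:ℤ) := by zify at h2; linarith
  have := int_factor_mm (k := (k:ℤ)) (l := (l:ℤ)) (by positivity) (by positivity)
    (by rw [h1', h2'])
  exact_mod_cast this

lemma uniq_pp {n k l : ℕ} (h1 : 2*n = 3*k^2 + k) (h2 : 2*n = 3*l^2 + l) : k = l := by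
  have h1' : 3*(k:ℤ)^2 + k = 2*(n:ℤ) := by zify at h1; linarith
  have h2' : 3*(l:ℤ)^2 + l = 2*(n:ℤ) := by zify at h2; linarith
  have := int_factor_pp (k := (k:ℤ)) (l := (l:ℤ)) (by positivity) (by positivity)
    (by rw [h1', h2'])
  exact_mod_cast this

lemma uniq_mp {n k l : ℕ} (h1 : 2*n + k = 3*k^2) (h2 : 2*n = 3*l^2 + l) : k = 0 ∧ l = 0 := by
  have h1' : 3*(k:ℤ)^2 - k = 2*(n:ℤ) := by zify at h1; linarith
  have h2' : 3*(l:ℤ)^2 + l = 2*(n:ℤ) := by zify at h2; linarith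
  have := int_factor_mp (k := (k:ℤ)) (l := (l:ℤ)) (by positivity) (by positivity)
    (by rw [h1', h2'])
  exact_mod_cast this

lemma le_three_sq (k : ℕ) : k ≤ 3 * k^2 := by
  have := Nat.le_self_pow (two_ne_zero) k
  linarith

lemma sum_Icc1 {k : ℕ} (hk : 1 ≤ k) :
    2 * (∑ x ∈ Finset.Icc k (2*k-1), x) + k = 3*k^2 := by
  have h := gauss (a := k) (b := 2*k-1) (by omega)
  have h2 : 2*k-1+1 = 2*k := by omega
  rw [h2] at h
  zify [show 1 ≤ 2*k by omega, show 1 ≤ k by omega] at h ⊢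
  linear_combination h

lemma sum_Icc2 (k : ℕ) :
    2 * (∑ x ∈ Finset.Icc (k+1) (2*k), x) = 3*k^2 + k := by
  have h := gauss (a := k+1) (b := 2*k) (by omega)
  rw [Nat.add_sub_cancel] at h
  zify at h ⊢
  linear_combination h

lemma e_eq_m {n k : ℕ} (hn : 1 ≤ n) (hk : 2*n + k = 3*k^2) : e n = (-1)^(k+1) := by
  have hkmem : k ∈ Finset.range (2*n+2) := by
    rw [Finset.mem_range]
    have := le_three_sq k
    have hkk := Nat.le_self_pow (two_ne_zero) k
    nlinarith [sq_nonneg k]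
  have hoth : ∀ l ∈ Finset.range (2*n+2), l ≠ k →
      (if 2 * n = 3 * l ^ 2 - l ∨ 2 * n = 3 * l ^ 2 + l then ((-1):ℤ) ^ (l + 1) else 0) = 0 := by
    intro l _ hlk
    rw [if_neg]
    rintro (h | h)
    · have h' : 2*n + l = 3*l^2 :=
        (Nat.eq_add_of_sub_eq (le_three_sq l) h.symm).symm
      exact hlk (uniq_mm h' hk)
    · obtain ⟨hk0, _⟩ := uniq_mp hk h
      rw [hk0] at hk
      simp at hk
      omega
  rw [e, Finset.sum_eq_single_of_mem k hkmem hoth,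
    if_pos (Or.inl (Nat.sub_eq_of_eq_add hk.symm).symm)]

lemma e_eq_p {n k : ℕ} (hn : 1 ≤ n) (hk : 2*n = 3*k^2 + k) : e n = (-1)^(k+1) := by
  have hkmem : k ∈ Finset.range (2*n+2) := by
    rw [Finset.mem_range]
    have := le_three_sq k
    linarith
  have hoth : ∀ l ∈ Finset.range (2*n+2), l ≠ k →
      (if 2 * n = 3 * l ^ 2 - l ∨ 2 * n = 3 * l ^ 2 + l then ((-1):ℤ) ^ (l + 1) else 0) = 0 := by
    intro l _ hlk
    rw [if_neg]
    rintro (h | h)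
    · have h' : 2*n + l = 3*l^2 :=
        (Nat.eq_add_of_sub_eq (le_three_sq l) h.symm).symm
      obtain ⟨hl0, hk0⟩ := uniq_mp h' hk
      rw [hk0] at hk
      simp at hk
      omega
    · exact hlk (uniq_pp h hk)
  rw [e, Finset.sum_eq_single_of_mem k hkmem hoth, if_pos (Or.inr hk)]

lemma e_eq_zero {n : ℕ} (hn : 1 ≤ n)
    (h : ∀ k : ℕ, ¬ (2*n + k = 3*k^2) ∧ ¬ (2*n = 3*k^2 + k)) : e n = 0 := by
  rw [e]
  apply Finset.sum_eq_zero
  intro l _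
  rw [if_neg]
  rintro (h' | h')
  · exact (h l).1 (Nat.eq_add_of_sub_eq (le_three_sq l) h'.symm).symm
  · exact (h l).2 h'

lemma T_eq_neg_e (n : ℕ) : T n = - e n := by
  rcases Nat.eq_zero_or_pos n with rfl | hn
  · have hS : S 0 = {∅} := by
      ext s
      rw [mem_S, Finset.mem_singleton]
      constructor
      · rintro ⟨hsub, _⟩
        rw [Finset.Icc_eq_empty (by omega)] at hsub
        exact Finset.subset_empty.1 hsub
      · rintro rfl
        simp
    have he : e 0 = -1 := by
      rw [e]
      norm_num [Finset.sum_range_succ]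
    rw [T, hS, Finset.sum_singleton, he]
    simp
  by_cases h1 : ∃ k, 1 ≤ k ∧ 2*n + k = 3*k^2
  · obtain ⟨k, hk1, hk⟩ := h1
    have hmem : Finset.Icc k (2*k-1) ∈ (S n).filter Exc := by
      rw [Finset.mem_filter]
      constructor
      · rw [mem_S]
        constructor
        · intro x hx
          rw [Finset.mem_Icc] at hx ⊢
          have hk' : 2*(n:ℤ) + k = 3*(k:ℤ)^2 := by exact_mod_cast hk
          have hnn : 4*(k:ℤ) ≤ 2*(n:ℤ) + 2 := by nlinarith [sq_nonneg ((k:ℤ)-1)]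
          have hnn' : 4*k ≤ 2*n + 2 := by exact_mod_cast hnn
          omega
        · have hs := sum_Icc1 hk1
          have hx : k ^ 2 = k * k := sq k
          omega
      · exact ⟨k, hk1, Or.inl rfl⟩
    have hfil : (S n).filter Exc = {Finset.Icc k (2*k-1)} := by
      apply Finset.eq_singleton_iff_unique_mem.2
      refine ⟨hmem, ?_⟩
      intro t ht
      rw [Finset.mem_filter, mem_S] at ht
      obtain ⟨⟨hsub, hsum⟩, l, hl1, hc | hc⟩ := ht
      · rw [hc] at hsum
        have hs := sum_Icc1 hl1
        rw [hsum] at hs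
        rw [hc, uniq_mm hs hk]
      · rw [hc] at hsum
        have hs := sum_Icc2 l
        rw [hsum] at hs
        obtain ⟨hk0, _⟩ := uniq_mp hk hs
        omega
    rw [T_eq_exc hn, hfil, Finset.sum_singleton, Nat.card_Icc, e_eq_m hn hk]
    have hc : 2*k - 1 + 1 - k = k := by omega
    rw [hc, pow_succ]
    ring
  by_cases h2 : ∃ k, 1 ≤ k ∧ 2*n = 3*k^2 + k
  · obtain ⟨k, hk1, hk⟩ := h2
    have hmem : Finset.Icc (k+1) (2*k) ∈ (S n).filter Exc := by
      rw [Finset.mem_filter]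
      constructor
      · rw [mem_S]
        constructor
        · intro x hx
          rw [Finset.mem_Icc] at hx ⊢
          have hkk : k ≤ k^2 := Nat.le_self_pow (two_ne_zero) k
          have hnn : 4*k ≤ 2*n := by linarith
          omega
        · have hs := sum_Icc2 k
          omega
      · exact ⟨k, hk1, Or.inr rfl⟩
    have hfil : (S n).filter Exc = {Finset.Icc (k+1) (2*k)} := by
      apply Finset.eq_singleton_iff_unique_mem.2
      refine ⟨hmem, ?_⟩
      intro t ht
      rw [Finset.mem_filter, mem_S] at ht
      obtain ⟨⟨hsub, hsum⟩, l, hl1, hc | hc⟩ := ht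
      · rw [hc] at hsum
        have hs := sum_Icc1 hl1
        rw [hsum] at hs
        obtain ⟨_, hk0⟩ := uniq_mp hs hk
        omega
      · rw [hc] at hsum
        have hs := sum_Icc2 l
        rw [hsum] at hs
        rw [hc, uniq_pp hs hk]
    rw [T_eq_exc hn, hfil, Finset.sum_singleton, Nat.card_Icc, e_eq_p hn hk]
    have hc : 2*k + 1 - (k+1) = k := by omega
    rw [hc, pow_succ]
    ring
  · have hfil : (S n).filter Exc = ∅ := by
      rw [Finset.filter_eq_empty_iff]
      intro t ht
      rw [mem_S] at ht
      obtain ⟨hsub, hsum⟩ := ht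
      rintro ⟨l, hl1, hc | hc⟩
      · rw [hc] at hsum
        have hs := sum_Icc1 hl1
        rw [hsum] at hs
        exact h1 ⟨l, hl1, hs⟩
      · rw [hc] at hsum
        have hs := sum_Icc2 l
        rw [hsum] at hs
        exact h2 ⟨l, hl1, hs⟩
    have he : e n = 0 := by
      apply e_eq_zero hn
      intro k
      constructor
      · intro hc
        have hk1 : 1 ≤ k := by
          rcases Nat.eq_zero_or_pos k with rfl | h
          · simp at hc; omega
          · exact h
        exact h1 ⟨k, hk1, hc⟩
      · intro hc
        have hk1 : 1 ≤ k := by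
          rcases Nat.eq_zero_or_pos k with rfl | h
          · simp at hc; omega
          · exact h
        exact h2 ⟨k, hk1, hc⟩
    rw [T_eq_exc hn, hfil, he]
    simp

lemma T_succ (n : ℕ) : T (n+1) = T2 (n+1) - T2 n := by
  classical
  rw [T, ← Finset.sum_filter_add_sum_filter_not (S (n+1)) (fun s => (1:ℕ) ∈ s)]
  have hnot : (S (n+1)).filter (fun s => ¬ (1:ℕ) ∈ s) = S2 (n+1) := by
    ext s
    rw [Finset.mem_filter, mem_S, mem_S2]
    constructor
    · rintro ⟨⟨hsub, hsum⟩, h1⟩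
      refine ⟨?_, hsum⟩
      intro x hx
      have hb := Finset.mem_Icc.1 (hsub hx)
      have hx1 : x ≠ 1 := fun h => h1 (h ▸ hx)
      rw [Finset.mem_Icc]
      omega
    · rintro ⟨hsub, hsum⟩
      have h1 : (1:ℕ) ∉ s := fun h => by
        have := Finset.mem_Icc.1 (hsub h); omega
      refine ⟨⟨?_, hsum⟩, h1⟩
      intro x hx
      have hb := Finset.mem_Icc.1 (hsub hx)
      rw [Finset.mem_Icc]
      omega
  have hyes : ∑ s ∈ (S (n+1)).filter (fun s => (1:ℕ) ∈ s), (-1:ℤ)^s.card = - T2 n := by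
    rw [T2, ← Finset.sum_neg_distrib]
    apply Finset.sum_nbij' (i := fun s => s.erase 1) (j := fun t => insert 1 t)
    · intro s hs
      rw [Finset.mem_filter, mem_S] at hs
      obtain ⟨⟨hsub, hsum⟩, h1⟩ := hs
      rw [mem_S2]
      constructor
      · intro x hx
        obtain ⟨hx1, hxs⟩ := Finset.mem_erase.1 hx
        have hb := Finset.mem_Icc.1 (hsub hxs)
        have hpair : ({1, x} : Finset ℕ) ⊆ s := by
          intro y hy
          rcases Finset.mem_insert.1 hy with rfl | hy
          · exact h1
          · rw [Finset.mem_singleton.1 hy]; exact hxs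
        have hsumpair : 1 + x ≤ ∑ y ∈ s, y := by
          have := Finset.sum_le_sum_of_subset (f := fun y => y) hpair
          rwa [Finset.sum_pair (by omega : (1:ℕ) ≠ x)] at this
        rw [Finset.mem_Icc]
        omega
      · have h := Finset.add_sum_erase s (fun x => x) h1
        rw [hsum] at h
        omega
    · intro t ht
      rw [mem_S2] at ht
      obtain ⟨hsub, hsum⟩ := ht
      have h1 : (1:ℕ) ∉ t := fun h => by
        have := Finset.mem_Icc.1 (hsub h); omega
      rw [Finset.mem_filter, mem_S]
      refine ⟨⟨?_, ?_⟩, Finset.mem_insert_self 1 t⟩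
      · intro x hx
        rcases Finset.mem_insert.1 hx with rfl | hx
        · rw [Finset.mem_Icc]; omega
        · have hb := Finset.mem_Icc.1 (hsub hx)
          have : x ≤ ∑ y ∈ t, y :=
            Finset.single_le_sum (f := fun y => y) (fun i _ => Nat.zero_le i) hx
          rw [Finset.mem_Icc]
          omega
      · rw [Finset.sum_insert h1, hsum]
        omega
    · intro s hs
      rw [Finset.mem_filter] at hs
      exact Finset.insert_erase hs.2
    · intro t ht
      rw [mem_S2] at ht
      have h1 : (1:ℕ) ∉ t := fun h => by
        have := Finset.mem_Icc.1 (ht.1 h); omega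
      exact Finset.erase_insert h1
    · intro s hs
      rw [Finset.mem_filter] at hs
      have hc : s.card = (s.erase 1).card + 1 := by
        rw [Finset.card_erase_of_mem hs.2]
        have : 1 ≤ s.card := Finset.card_pos.2 ⟨1, hs.2⟩
        omega
      rw [hc, pow_succ]
      ring
  rw [hyes, hnot, ← T2]
  ring

lemma T2_eq_neg_f (n : ℕ) : T2 n = - f n := by
  induction n with
  | zero =>
    have hS : S2 0 = {∅} := by
      ext s
      rw [mem_S2, Finset.mem_singleton]
      constructor
      · rintro ⟨hsub, _⟩
        rw [Finset.Icc_eq_empty (by omega)] at hsub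
        exact Finset.subset_empty.1 hsub
      · rintro rfl
        simp
    have he : e 0 = -1 := by
      rw [e]
      norm_num [Finset.sum_range_succ]
    rw [T2, hS, Finset.sum_singleton, f, Finset.sum_range_one, he]
    simp
  | succ n ih =>
    have h := T_succ n
    have h2 := T_eq_neg_e (n+1)
    have h3 : f (n+1) = f n + e (n+1) := by
      rw [f, f, Finset.sum_range_succ]
    rw [h3]
    linarith

lemma card_eq (j : ℕ) (q : ℕ → Prop) [DecidablePred q] :
    Nat.card {P : Nat.Partition j //
      P.parts.Nodup ∧ (∀ x ∈ P.parts, 2 ≤ x) ∧ q (Multiset.card P.parts)}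
      = ((S2 j).filter (fun s => q s.card)).card := by
  classical
  rw [Nat.card_eq_fintype_card, Fintype.card_subtype]
  apply Finset.card_bij (i := fun P _ => P.parts.toFinset)
  · intro P hP
    simp only [Finset.mem_filter, Finset.mem_univ, true_and] at hP
    obtain ⟨hnd, h2, hq⟩ := hP
    have hval : P.parts.toFinset.val = P.parts := by
      rw [Multiset.toFinset_val, Multiset.dedup_eq_self.2 hnd]
    rw [Finset.mem_filter]
    constructor
    · rw [mem_S2]
      constructor
      · intro x hx
        rw [Multiset.mem_toFinset] at hx
        rw [Finset.mem_Icc]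
        refine ⟨h2 x hx, ?_⟩
        have hle : x ≤ P.parts.sum :=
          Multiset.single_le_sum (fun y _ => Nat.zero_le y) x hx
        rw [P.parts_sum] at hle
        exact hle
      · have hv : P.parts.toFinset.sum id = j := by
          rw [← Finset.sum_val, hval, P.parts_sum]
        exact hv
    · have hcard : P.parts.toFinset.card = Multiset.card P.parts :=
        Multiset.toFinset_card_of_nodup hnd
      rw [hcard]
      exact hq
  · intro P hP Q hQ h
    simp only [Finset.mem_filter, Finset.mem_univ, true_and] at hP hQ
    have hvP : P.parts.toFinset.val = P.parts := by
      rw [Multiset.toFinset_val, Multiset.dedup_eq_self.2 hP.1]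
    have hvQ : Q.parts.toFinset.val = Q.parts := by
      rw [Multiset.toFinset_val, Multiset.dedup_eq_self.2 hQ.1]
    apply Nat.Partition.ext
    rw [← hvP, ← hvQ, h]
  · intro t ht
    rw [Finset.mem_filter] at ht
    obtain ⟨ht2, hq⟩ := ht
    rw [mem_S2] at ht2
    obtain ⟨hsub, hsum⟩ := ht2
    have hsum' : t.val.sum = j := by
      rw [Finset.sum_val]
      exact hsum
    refine ⟨⟨t.val, ?_, hsum'⟩, ?_, ?_⟩
    · intro i hi
      have := Finset.mem_Icc.1 (hsub hi)
      omega
    · simp only [Finset.mem_filter, Finset.mem_univ, true_and]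
      refine ⟨t.nodup, ?_, ?_⟩
      · intro x hx
        exact (Finset.mem_Icc.1 (hsub hx)).1
      · exact hq
    · exact Finset.val_toFinset t

lemma T2_eq_counts (j : ℕ) :
    T2 j = (((S2 j).filter (fun s => Even s.card)).card : ℤ)
      - (((S2 j).filter (fun s => ¬ Even s.card)).card : ℤ) := by
  rw [T2, ← Finset.sum_filter_add_sum_filter_not (S2 j) (fun s => Even s.card)]
  have h1 : ∑ s ∈ (S2 j).filter (fun s => Even s.card), (-1:ℤ)^s.card
      = ((S2 j).filter (fun s => Even s.card)).card := by
    rw [Finset.sum_congr rfl (fun s hs => (Finset.mem_filter.1 hs).2.neg_one_pow)]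
    simp
  have h2 : ∑ s ∈ (S2 j).filter (fun s => ¬ Even s.card), (-1:ℤ)^s.card
      = -(((S2 j).filter (fun s => ¬ Even s.card)).card : ℤ) := by
    rw [Finset.sum_congr rfl (fun s hs =>
      (Nat.not_even_iff_odd.1 (Finset.mem_filter.1 hs).2).neg_one_pow)]
    simp
  rw [h1, h2]
  ring

end PentAux

theorem f_eq_odd_sub_even (j : ℕ) (hj : 1 ≤ j) :
    f j = (O2 j : ℤ) - E2 j := by
  classical
  have hO : O2 j = ((PentAux.S2 j).filter (fun s => Odd s.card)).card :=
    PentAux.card_eq j Odd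
  have hE : E2 j = ((PentAux.S2 j).filter (fun s => Even s.card)).card :=
    PentAux.card_eq j Even
  have hodd : (PentAux.S2 j).filter (fun s => Odd s.card)
      = (PentAux.S2 j).filter (fun s => ¬ Even s.card) :=
    Finset.filter_congr (fun s _ => Nat.not_even_iff_odd.symm)
  have hT := PentAux.T2_eq_counts j
  have hf := PentAux.T2_eq_neg_f j
  rw [hO, hE, hodd]
  rw [hT] at hf
  linarith
end

section
/- For every natural number n, p(n) = 1 + Σ_{j=2}^{n} (O₂(j) − E₂(j))·p(n−j). -/
namespace PRAux

open PowerSeries Finset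
open scoped Classical

noncomputable section

variable {α : Type*}


/-- A convenience constructor for the power series whose coefficients indicate a subset. -/
def indicatorSeries (α : Type*) [Semiring α] (s : Set ℕ) : PowerSeries α :=
  PowerSeries.mk fun n => if n ∈ s then 1 else 0

theorem coeff_indicator (s : Set ℕ) [Semiring α] (n : ℕ) :
    coeff (R := α) n (indicatorSeries _ s) = if n ∈ s then 1 else 0 :=
  coeff_mk _ _

theorem coeff_indicator_pos (s : Set ℕ) [Semiring α] (n : ℕ) (h : n ∈ s) :
    coeff (R := α) n (indicatorSeries _ s) = 1 := by rw [coeff_indicator, if_pos h]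

theorem coeff_indicator_neg (s : Set ℕ) [Semiring α] (n : ℕ) (h : n ∉ s) :
    coeff (R := α) n (indicatorSeries _ s) = 0 := by rw [coeff_indicator, if_neg h]

theorem constantCoeff_indicator (s : Set ℕ) [Semiring α] :
    constantCoeff (R := α) (indicatorSeries _ s) = if 0 ∈ s then 1 else 0 :=
  rfl

theorem num_series' [Field α] (i : ℕ) :
    (1 - (X : PowerSeries α) ^ (i + 1))⁻¹ = indicatorSeries α {k | i + 1 ∣ k} := by
  rw [PowerSeries.inv_eq_iff_mul_eq_one]
  · ext n
    cases n with
    | zero => simp [mul_sub, zero_pow, constantCoeff_indicator]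
    | succ n =>
      simp only [coeff_one, if_false, mul_sub, mul_one, coeff_indicator,
        LinearMap.map_sub, reduceCtorEq]
      simp_rw [coeff_mul, coeff_X_pow, coeff_indicator, @boole_mul _ _ _ _]
      erw [@sum_ite _ _ _ _ _ (fun _ => Classical.propDecidable _), sum_ite]
      simp_rw [@filter_filter _ _ _ _ _, sum_const_zero, add_zero, sum_const, nsmul_eq_mul, mul_one,
        sub_eq_iff_eq_add, zero_add]
      symm
      split_ifs with h
      · suffices #{a ∈ antidiagonal (n + 1) | i + 1 ∣ a.fst ∧ a.snd = i + 1} = 1 by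
          simp only [Set.mem_setOf_eq]; convert congr_arg ((↑) : ℕ → α) this; norm_cast
        rw [card_eq_one]
        cases' h with p hp
        refine ⟨((i + 1) * (p - 1), i + 1), ?_⟩
        ext ⟨a₁, a₂⟩
        simp only [mem_filter, Prod.mk_inj, HasAntidiagonal.mem_antidiagonal, mem_singleton]
        constructor
        · rintro ⟨a_left, ⟨a, rfl⟩, rfl⟩
          refine ⟨?_, rfl⟩
          rw [Nat.mul_sub_left_distrib, ← hp, ← a_left, mul_one, Nat.add_sub_cancel]
        · rintro ⟨rfl, rfl⟩
          match p with
          | 0 => rw [mul_zero] at hp; cases hp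
          | p + 1 => rw [hp]; simp [mul_add]
      · suffices #{a ∈ antidiagonal (n + 1) | i + 1 ∣ a.fst ∧ a.snd = i + 1} = 0 by
          simp only [Set.mem_setOf_eq]; convert congr_arg ((↑) : ℕ → α) this; norm_cast
        rw [card_eq_zero]
        apply eq_empty_of_forall_notMem
        simp only [Prod.forall, mem_filter, not_and, HasAntidiagonal.mem_antidiagonal]
        rintro _ h₁ h₂ ⟨a, rfl⟩ rfl
        apply h
        simp [← h₂]
  · simp [zero_pow]

-- The main workhorse of the partition theorem proof.
theorem partialGF_prop (α : Type*) [CommSemiring α] (n : ℕ) (s : Finset ℕ) (hs : ∀ i ∈ s, 0 < i)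
    (c : ℕ → Set ℕ) (hc : ∀ i, i ∉ s → 0 ∈ c i) :
    #{p : n.Partition | (∀ j, p.parts.count j ∈ c j) ∧ ∀ j ∈ p.parts, j ∈ s} =
      coeff (R := α) n (∏ i ∈ s, indicatorSeries α ((· * i) '' c i)) := by
  simp_rw [coeff_prod, coeff_indicator, prod_boole, sum_boole]
  apply congr_arg
  simp only [mem_univ, forall_true_left, not_and, not_forall, exists_prop,
    Set.mem_image, not_exists]
  set φ : (a : Nat.Partition n) →
    a ∈ filter (fun p ↦ (∀ (j : ℕ), Multiset.count j p.parts ∈ c j) ∧ ∀ j ∈ p.parts, j ∈ s) univ →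
    ℕ →₀ ℕ := fun p _ => {
      toFun := fun i => Multiset.count i p.parts • i
      support := Finset.filter (fun i => i ≠ 0) p.parts.toFinset
      mem_support_toFun := fun a => by
        simp only [smul_eq_mul, ne_eq, mul_eq_zero, Multiset.count_eq_zero]
        rw [not_or, not_not]
        simp only [Multiset.mem_toFinset, not_not, mem_filter] }
  refine Finset.card_bij φ ?_ ?_ ?_
  · intro a ha
    simp only [φ, not_forall, not_exists, not_and, exists_prop, mem_filter]
    rw [mem_finsuppAntidiag]
    dsimp only [ne_eq, smul_eq_mul, id_eq, eq_mpr_eq_cast, le_eq_subset, Finsupp.coe_mk]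
    simp only [mem_univ, forall_true_left, not_and, not_forall, exists_prop,
      mem_filter, true_and] at ha
    refine ⟨⟨?_, fun i ↦ ?_⟩, fun i _ ↦ ⟨a.parts.count i, ha.1 i, rfl⟩⟩
    · conv_rhs => simp [← a.parts_sum]
      rw [sum_multiset_count_of_subset _ s]
      · simp only [smul_eq_mul]
      · intro i
        simp only [Multiset.mem_toFinset, not_not, mem_filter]
        apply ha.2
    · simp only [ne_eq, Multiset.mem_toFinset, not_not, mem_filter, and_imp]
      exact fun hi _ ↦ ha.2 i hi
  · intro p₁ hp₁ p₂ hp₂ h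
    apply Nat.Partition.ext
    simp only [true_and, mem_univ, mem_filter] at hp₁ hp₂
    ext i
    simp only [φ, ne_eq, Multiset.mem_toFinset, not_not, smul_eq_mul, Finsupp.mk.injEq] at h
    by_cases hi : i = 0
    · rw [hi]
      rw [Multiset.count_eq_zero_of_notMem]
      · rw [Multiset.count_eq_zero_of_notMem]
        intro a; exact Nat.lt_irrefl 0 (hs 0 (hp₂.2 0 a))
      intro a; exact Nat.lt_irrefl 0 (hs 0 (hp₁.2 0 a))
    · rw [← mul_left_inj' hi]
      rw [funext_iff] at h
      exact h.2 i
  · simp only [φ, mem_filter, mem_finsuppAntidiag, mem_univ, exists_prop, true_and, and_assoc]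
    rintro f ⟨hf, hf₃, hf₄⟩
    have hf' : f ∈ finsuppAntidiag s n := mem_finsuppAntidiag.mpr ⟨hf, hf₃⟩
    simp only [mem_finsuppAntidiag] at hf'
    refine ⟨⟨∑ i ∈ s, Multiset.replicate (f i / i) i, ?_, ?_⟩, ?_, ?_, ?_⟩
    · intro i hi
      simp only [exists_prop, Multiset.mem_sum, mem_map, Function.Embedding.coeFn_mk] at hi
      rcases hi with ⟨t, ht, z⟩
      apply hs
      rwa [Multiset.eq_of_mem_replicate z]
    · simp_rw [Multiset.sum_sum, Multiset.sum_replicate, Nat.nsmul_eq_mul]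
      rw [← hf'.1]
      refine sum_congr rfl fun i hi => Nat.div_mul_cancel ?_
      rcases hf₄ i hi with ⟨w, _, hw₂⟩
      rw [← hw₂]
      exact dvd_mul_left _ _
    · intro i
      simp_rw [Multiset.count_sum', Multiset.count_replicate, sum_ite_eq']
      split_ifs with h
      · rcases hf₄ i h with ⟨w, hw₁, hw₂⟩
        rwa [← hw₂, Nat.mul_div_cancel _ (hs i h)]
      · exact hc _ h
    · intro i hi
      rw [Multiset.mem_sum] at hi
      rcases hi with ⟨j, hj₁, hj₂⟩
      rwa [Multiset.eq_of_mem_replicate hj₂]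
    · ext i
      simp_rw [Multiset.count_sum', Multiset.count_replicate, sum_ite_eq']
      simp only [ne_eq, Multiset.mem_toFinset, not_not, smul_eq_mul, ite_mul,
        zero_mul, Finsupp.coe_mk]
      split_ifs with h
      · apply Nat.div_mul_cancel
        rcases hf₄ i h with ⟨w, _, hw₂⟩
        apply Dvd.intro_left _ hw₂
      · apply symm
        rw [← Finsupp.notMem_support_iff]
        exact notMem_mono hf'.2 h

lemma coeff_F (n m : ℕ) (hm : m ≤ n) :
    (PowerSeries.coeff (R := ℚ) m) (∏ i ∈ Finset.Icc 1 n, (1 - (X : PowerSeries ℚ) ^ i)⁻¹) = p m := by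
  have h1 : ∀ i ∈ Finset.Icc 1 n, (1 - (X : PowerSeries ℚ) ^ i)⁻¹
      = indicatorSeries ℚ ((· * i) '' (Set.univ : Set ℕ)) := by
    intro i hi
    obtain ⟨k, rfl⟩ : ∃ k, i = k + 1 := ⟨i - 1, by have := (Finset.mem_Icc.1 hi).1; omega⟩
    rw [num_series']
    have hset : {m | k + 1 ∣ m} = ((· * (k + 1)) '' (Set.univ : Set ℕ)) := by
      ext x
      simp only [Set.mem_setOf_eq, Set.mem_image, Set.mem_univ, true_and]
      constructor
      · rintro ⟨c, rfl⟩; exact ⟨c, mul_comm _ _⟩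
      · rintro ⟨c, rfl⟩; exact ⟨c, mul_comm _ _⟩
    rw [hset]
  rw [Finset.prod_congr rfl h1,
    ← partialGF_prop ℚ m (Finset.Icc 1 n) (fun i hi => (Finset.mem_Icc.1 hi).1)
      (fun _ => Set.univ) (fun _ _ => trivial)]
  have hall : ∀ P : Nat.Partition m,
      (∀ j, P.parts.count j ∈ (Set.univ : Set ℕ)) ∧ ∀ j ∈ P.parts, j ∈ Finset.Icc 1 n := by
    intro P
    refine ⟨fun _ => trivial, fun j hj => Finset.mem_Icc.2 ⟨P.parts_pos hj, ?_⟩⟩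
    calc j ≤ P.parts.sum := Multiset.le_sum_of_mem hj
    _ = m := P.parts_sum
    _ ≤ n := hm
  rw [Finset.filter_true_of_mem (fun P _ => hall P), Finset.card_univ, p,
    Nat.card_eq_fintype_card]

lemma val_sum (t : Finset ℕ) : t.val.sum = ∑ i ∈ t, i := by
  rw [Finset.sum_eq_multiset_sum, Multiset.map_id']

lemma card_subsets (n j : ℕ) (hj : j ≤ n) (Q : ℕ → Prop) :
    ((Finset.Icc 2 n).powerset.filter fun t => (∑ i ∈ t, i) = j ∧ Q t.card).card =
      Nat.card {P : Nat.Partition j //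
        P.parts.Nodup ∧ (∀ x ∈ P.parts, 2 ≤ x) ∧ Q (Multiset.card P.parts)} := by
  rw [Nat.card_eq_fintype_card, Fintype.card_subtype]
  have hmem : ∀ t ∈ (Finset.Icc 2 n).powerset.filter
      (fun t => (∑ i ∈ t, i) = j ∧ Q t.card),
      (∀ x ∈ t.val, 0 < x) ∧ t.val.sum = j := by
    intro t ht
    rw [Finset.mem_filter, Finset.mem_powerset] at ht
    refine ⟨fun x hx => ?_, by rw [val_sum]; exact ht.2.1⟩
    have := Finset.mem_Icc.1 (ht.1 hx)
    omega
  refine Finset.card_bij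
    (fun t ht => ⟨t.val, fun hx => (hmem t ht).1 _ hx, (hmem t ht).2⟩) ?_ ?_ ?_
  · intro t ht
    have ht' := ht
    rw [Finset.mem_filter, Finset.mem_powerset] at ht'
    refine Finset.mem_filter.2 ⟨Finset.mem_univ _, t.nodup, fun x hx => ?_, ?_⟩
    · exact (Finset.mem_Icc.1 (ht'.1 hx)).1
    · exact ht'.2.2
  · intro t₁ ht₁ t₂ ht₂ h
    exact Finset.val_injective (congrArg Nat.Partition.parts h)
  · intro P hP
    rw [Finset.mem_filter] at hP
    obtain ⟨-, hnd, h2, hQ⟩ := hP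
    refine ⟨⟨P.parts, hnd⟩, ?_, ?_⟩
    · rw [Finset.mem_filter, Finset.mem_powerset]
      refine ⟨fun x hx => ?_, ?_, hQ⟩
      · rw [Finset.mem_Icc]
        refine ⟨h2 x hx, ?_⟩
        calc (x : ℕ) ≤ P.parts.sum := Multiset.le_sum_of_mem hx
        _ = j := P.parts_sum
        _ ≤ n := hj
      · rw [← val_sum]; exact P.parts_sum
    · exact Nat.Partition.ext rfl

lemma coeff_D (n j : ℕ) (hj : j ≤ n) :
    (PowerSeries.coeff (R := ℚ) j) (∏ i ∈ Finset.Icc 2 n, (1 - (X : PowerSeries ℚ) ^ i)) =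
      (E2 j : ℚ) - O2 j := by
  have h1 : ∀ i ∈ Finset.Icc 2 n, (1 - (X : PowerSeries ℚ) ^ i) = -X ^ i + 1 := by
    intro i _; ring
  rw [Finset.prod_congr rfl h1, Finset.prod_add, map_sum]
  have h2 : ∀ t ∈ (Finset.Icc 2 n).powerset,
      (PowerSeries.coeff (R := ℚ) j)
          ((∏ i ∈ t, -(X : PowerSeries ℚ) ^ i) * ∏ _i ∈ Finset.Icc 2 n \ t, 1)
        = if (∑ i ∈ t, i) = j then (-1 : ℚ) ^ t.card else 0 := by
    intro t _
    rw [Finset.prod_const_one, mul_one]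
    have h3 : (∏ i ∈ t, -(X : PowerSeries ℚ) ^ i)
        = (PowerSeries.C (R := ℚ)) ((-1 : ℚ) ^ t.card) * X ^ (∑ i ∈ t, i) := by
      rw [← Finset.prod_pow_eq_pow_sum, map_pow, map_neg, map_one, ← Finset.prod_const,
        ← Finset.prod_mul_distrib]
      exact Finset.prod_congr rfl fun i _ => by ring
    rw [h3, PowerSeries.coeff_C_mul, PowerSeries.coeff_X_pow]
    rcases eq_or_ne (∑ i ∈ t, i) j with h | h
    · rw [if_pos h.symm, if_pos h, mul_one]
    · rw [if_neg fun hh => h hh.symm, if_neg h, mul_zero]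
  rw [Finset.sum_congr rfl h2, ← Finset.sum_filter]
  rw [← Finset.sum_filter_add_sum_filter_not _ (fun t => Even t.card)]
  have he : ∀ t ∈ (((Finset.Icc 2 n).powerset.filter fun t => (∑ i ∈ t, i) = j).filter
      fun t => Even t.card), (-1 : ℚ) ^ t.card = 1 := by
    intro t ht
    exact Even.neg_one_pow (Finset.mem_filter.1 ht).2
  have ho : ∀ t ∈ (((Finset.Icc 2 n).powerset.filter fun t => (∑ i ∈ t, i) = j).filter
      fun t => ¬ Even t.card), (-1 : ℚ) ^ t.card = -1 := by
    intro t ht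
    exact Odd.neg_one_pow (Nat.not_even_iff_odd.1 (Finset.mem_filter.1 ht).2)
  rw [Finset.sum_congr rfl he, Finset.sum_congr rfl ho, Finset.sum_const, Finset.sum_const,
    Finset.filter_filter, Finset.filter_filter]
  have hfo : ((Finset.Icc 2 n).powerset.filter fun t => (∑ i ∈ t, i) = j ∧ ¬ Even t.card)
      = ((Finset.Icc 2 n).powerset.filter fun t => (∑ i ∈ t, i) = j ∧ Odd t.card) :=
    Finset.filter_congr fun t _ => by rw [Nat.not_even_iff_odd]
  rw [hfo]
  have hE : ((Finset.Icc 2 n).powerset.filter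
      fun t => (∑ i ∈ t, i) = j ∧ Even t.card).card = E2 j := by
    rw [show E2 j = Nat.card {P : Nat.Partition j //
      P.parts.Nodup ∧ (∀ x ∈ P.parts, 2 ≤ x) ∧ Even (Multiset.card P.parts)} from rfl]
    convert card_subsets n j hj Even using 2
    congr!
  have hO : ((Finset.Icc 2 n).powerset.filter
      fun t => (∑ i ∈ t, i) = j ∧ Odd t.card).card = O2 j := by
    rw [show O2 j = Nat.card {P : Nat.Partition j //
      P.parts.Nodup ∧ (∀ x ∈ P.parts, 2 ≤ x) ∧ Odd (Multiset.card P.parts)} from rfl]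
    convert card_subsets n j hj Odd using 2
    congr!
  rw [hE, hO, nsmul_eq_mul, nsmul_eq_mul]
  ring

lemma p_zero : p 0 = 1 := by
  rw [p, Nat.card_eq_fintype_card, Fintype.card_unique]

lemma E2_zero : E2 0 = 1 := by
  have h : ∀ P : Nat.Partition 0, P.parts.Nodup ∧ (∀ x ∈ P.parts, 2 ≤ x) ∧
      Even (Multiset.card P.parts) := by
    intro P
    simp
  rw [E2, Nat.card_eq_fintype_card, Fintype.card_subtype,
    Finset.filter_true_of_mem fun P _ => h P, Finset.card_univ]
  exact Fintype.card_unique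

lemma O2_zero : O2 0 = 0 := by
  rw [O2, Nat.card_eq_fintype_card, Fintype.card_subtype, Finset.card_eq_zero]
  ext P
  simp [Nat.odd_iff]

lemma E2_one : E2 1 = 0 := by
  rw [E2, Nat.card_eq_fintype_card, Fintype.card_subtype, Finset.card_eq_zero]
  ext P
  simp

lemma O2_one : O2 1 = 0 := by
  rw [O2, Nat.card_eq_fintype_card, Fintype.card_subtype, Finset.card_eq_zero]
  ext P
  simp

lemma key (n : ℕ) (hn : 1 ≤ n) :
    (1 : ℚ) = ∑ j ∈ Finset.range (n + 1), ((E2 j : ℚ) - O2 j) * p (n - j) := by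
  have hsplit : Finset.Icc 1 n = insert 1 (Finset.Icc 2 n) := by
    ext x
    simp only [Finset.mem_Icc, Finset.mem_insert]
    omega
  have hinv : ∀ i ∈ Finset.Icc 2 n,
      (1 - (X : PowerSeries ℚ) ^ i) * (1 - (X : PowerSeries ℚ) ^ i)⁻¹ = 1 := by
    intro i hi
    apply PowerSeries.mul_inv_cancel
    have h2 : 2 ≤ i := (Finset.mem_Icc.1 hi).1
    rw [map_sub, map_one, map_pow, PowerSeries.constantCoeff_X,
      zero_pow (by omega : i ≠ 0), sub_zero]
    exact one_ne_zero
  have hDF : (∏ i ∈ Finset.Icc 2 n, (1 - (X : PowerSeries ℚ) ^ i)) *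
      (∏ i ∈ Finset.Icc 1 n, (1 - (X : PowerSeries ℚ) ^ i)⁻¹)
      = (1 - (X : PowerSeries ℚ))⁻¹ := by
    rw [hsplit, Finset.prod_insert (by simp), pow_one, mul_left_comm,
      ← Finset.prod_mul_distrib, Finset.prod_congr rfl hinv, Finset.prod_const_one, mul_one]
  have hcoeff := congrArg (PowerSeries.coeff (R := ℚ) n) hDF
  rw [PowerSeries.coeff_mul, Finset.Nat.sum_antidiagonal_eq_sum_range_succ_mk] at hcoeff
  have hone : (PowerSeries.coeff (R := ℚ) n) (1 - (X : PowerSeries ℚ))⁻¹ = 1 := by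
    have h := num_series' (α := ℚ) 0
    rw [pow_one] at h
    rw [h, coeff_indicator_pos]
    exact one_dvd n
  rw [hone] at hcoeff
  rw [← hcoeff]
  refine Finset.sum_congr rfl fun k hk => ?_
  have hk' : k ≤ n := by
    have := Finset.mem_range.1 hk
    omega
  rw [coeff_D n k hk', coeff_F n (n - k) (by omega)]

end
end PRAux

theorem partition_recurrence_odd_even (n : ℕ) :
    (p n : ℤ) = 1 + ∑ j ∈ Finset.Icc 2 n, ((O2 j : ℤ) - E2 j) * p (n - j) := by
  rcases Nat.eq_zero_or_pos n with rfl | hn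
  · rw [Finset.Icc_eq_empty (by omega), Finset.sum_empty, PRAux.p_zero]
    norm_num
  · have hkey := PRAux.key n hn
    have hset : Finset.range (n + 1) = insert 0 (insert 1 (Finset.Icc 2 n)) := by
      ext x
      simp only [Finset.mem_range, Finset.mem_insert, Finset.mem_Icc]
      omega
    rw [hset, Finset.sum_insert (by simp), Finset.sum_insert (by simp)] at hkey
    rw [PRAux.E2_zero, PRAux.O2_zero, PRAux.E2_one, PRAux.O2_one] at hkey
    simp only [Nat.cast_one, Nat.cast_zero, Nat.sub_zero, sub_zero, sub_self, one_mul,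
      zero_mul, zero_add] at hkey
    have hS : ∑ j ∈ Finset.Icc 2 n, ((O2 j : ℚ) - E2 j) * p (n - j)
        = -∑ j ∈ Finset.Icc 2 n, ((E2 j : ℚ) - O2 j) * p (n - j) := by
      rw [← Finset.sum_neg_distrib]
      exact Finset.sum_congr rfl fun j _ => by ring
    have hQ : (p n : ℚ) = 1 + ∑ j ∈ Finset.Icc 2 n, ((O2 j : ℚ) - E2 j) * p (n - j) := by
      rw [hS]
      linarith [hkey]
    have hZ : ((p n : ℤ) : ℚ)
        = ((1 + ∑ j ∈ Finset.Icc 2 n, ((O2 j : ℤ) - E2 j) * p (n - j) : ℤ) : ℚ) := by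
      push_cast
      exact hQ
    exact_mod_cast hZ
end

section
/- For every natural number n, f(n) ∈ {−1, 0, 1}. -/
lemma parity_step (K : ℕ) (h : 1 ≤ K) :
    ((K % 2 : ℕ) : ℤ) = ((K - 1) % 2 : ℕ) + (-1 : ℤ) ^ (K + 1) := by
  rcases Nat.even_or_odd K with hK | hK
  · have h1 : (-1 : ℤ) ^ (K + 1) = -1 := by
      rw [pow_succ, hK.neg_one_pow]; ring
    rw [h1]; obtain ⟨t, ht⟩ := hK; omega
  · have h1 : (-1 : ℤ) ^ (K + 1) = 1 := by
      rw [pow_succ, hK.neg_one_pow]; ring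
    rw [h1]; obtain ⟨t, ht⟩ := hK; omega

lemma alt_sum (M : ℕ) : ∀ K : ℕ,
    ∑ k ∈ Finset.Ico 1 K, ((-1 : ℤ) ^ (k + 1) * if k ≤ M then 1 else 0)
      = ((min (K - 1) M % 2 : ℕ) : ℤ) := by
  intro K
  induction K with
  | zero => simp
  | succ K ih =>
    rcases Nat.eq_zero_or_pos K with h | h
    · subst h; simp
    · rw [Finset.sum_Ico_succ_top h, ih]
      rcases le_or_gt K M with hKM | hKM
      · have h1 : min (K + 1 - 1) M = K := by omega
        have h2 : min (K - 1) M = K - 1 := by omega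
        rw [h1, h2, if_pos hKM, mul_one, ← parity_step K h]
      · have h1 : min (K + 1 - 1) M = min (K - 1) M := by omega
        rw [h1, if_neg (by omega), mul_zero, add_zero]

lemma inner_eval (n k : ℕ) (hk : 1 ≤ k) :
    ∑ m ∈ Finset.range (n + 1),
        (if 2 * m = 3 * k ^ 2 - k ∨ 2 * m = 3 * k ^ 2 + k then (-1 : ℤ) ^ (k + 1) else 0)
      = (-1 : ℤ) ^ (k + 1) *
          ((if 3 * k ^ 2 - k ≤ 2 * n then 1 else 0) + (if 3 * k ^ 2 + k ≤ 2 * n then 1 else 0)) := by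
  obtain ⟨c, hc⟩ : ∃ c, 3 * k ^ 2 - k = 2 * c := by
    rcases Nat.even_or_odd k with ⟨t, ht⟩ | ⟨t, ht⟩
    · have h4 : k ^ 2 = 4 * (t * t) := by subst ht; ring
      exact ⟨6 * (t * t) - t, by omega⟩
    · have h4 : k ^ 2 = 4 * (t * t) + 4 * t + 1 := by subst ht; ring
      exact ⟨6 * (t * t) + 5 * t + 1, by omega⟩
  obtain ⟨d, hd⟩ : ∃ d, 3 * k ^ 2 + k = 2 * d := by
    have hkk : k ≤ k ^ 2 := Nat.le_self_pow two_ne_zero k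
    exact ⟨c + k, by omega⟩
  have hcd : c ≠ d := by
    have hkk : k ≤ k ^ 2 := Nat.le_self_pow two_ne_zero k
    omega
  have hsplit : ∀ m ∈ Finset.range (n + 1),
      (if 2 * m = 3 * k ^ 2 - k ∨ 2 * m = 3 * k ^ 2 + k then (-1 : ℤ) ^ (k + 1) else 0)
        = (if m = c then (-1 : ℤ) ^ (k + 1) else 0) + (if m = d then (-1 : ℤ) ^ (k + 1) else 0) := by
    intro m _
    rw [hc, hd]
    rcases eq_or_ne m c with rfl | h1 <;> rcases eq_or_ne m d with rfl | h2 <;>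
      simp_all <;> omega
  rw [Finset.sum_congr rfl hsplit, Finset.sum_add_distrib,
    Finset.sum_ite_eq' (Finset.range (n + 1)) c (fun _ => (-1 : ℤ) ^ (k + 1)),
    Finset.sum_ite_eq' (Finset.range (n + 1)) d (fun _ => (-1 : ℤ) ^ (k + 1))]
  simp only [Finset.mem_range]
  rw [hc, hd]
  split_ifs <;> first | ring1 | (exfalso; omega)

lemma pent_mono : ∀ a b : ℕ, a ≤ b → 3 * a ^ 2 - a ≤ 3 * b ^ 2 - b := by
  intro a b hab
  have h1 : a ^ 2 ≤ b ^ 2 := Nat.pow_le_pow_left hab 2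
  have h2 : b - a ≤ (b - a) * (b + a) := by
    rcases Nat.eq_zero_or_pos (b + a) with h | h
    · omega
    · exact Nat.le_mul_of_pos_right _ h
  have h3 : (b - a) * (b + a) + a * a = b * b := by
    rcases Nat.le.dest hab with ⟨t, rfl⟩
    have ht : a + t - a = t := by omega
    rw [ht]; ring
  have h4 : a ^ 2 = a * a := sq a
  have h5 : b ^ 2 = b * b := sq b
  have ha : a ≤ a ^ 2 := Nat.le_self_pow two_ne_zero a
  have hb : b ≤ b ^ 2 := Nat.le_self_pow two_ne_zero b
  omega

theorem f_mem_pm_one_zero (n : ℕ) : f n ∈ ({-1, 0, 1} : Set ℤ) := by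
  have he : ∀ m ∈ Finset.range (n + 1), e m = ∑ k ∈ Finset.range (2 * n + 2),
      (if 2 * m = 3 * k ^ 2 - k ∨ 2 * m = 3 * k ^ 2 + k then (-1 : ℤ) ^ (k + 1) else 0) := by
    intro m hm
    simp only [Finset.mem_range] at hm
    unfold e
    apply Finset.sum_subset (Finset.range_subset_range.mpr (by omega))
    intro k hk hk2
    simp only [Finset.mem_range] at hk hk2
    have h1 : k ≤ k ^ 2 := Nat.le_self_pow two_ne_zero k
    rw [if_neg]
    push_neg
    omega
  have hf : f n = ∑ k ∈ Finset.range (2 * n + 2), ∑ m ∈ Finset.range (n + 1),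
      (if 2 * m = 3 * k ^ 2 - k ∨ 2 * m = 3 * k ^ 2 + k then (-1 : ℤ) ^ (k + 1) else 0) := by
    rw [show f n = ∑ m ∈ Finset.range (n + 1), e m from rfl, Finset.sum_congr rfl he,
      Finset.sum_comm]
  have hins : Finset.range (2 * n + 2) = insert 0 (Finset.Ico 1 (2 * n + 2)) := by
    ext x; simp only [Finset.mem_range, Finset.mem_insert, Finset.mem_Ico]; omega
  rw [hf, hins, Finset.sum_insert (by simp)]
  have h0 : ∑ m ∈ Finset.range (n + 1),
      (if 2 * m = 3 * 0 ^ 2 - 0 ∨ 2 * m = 3 * 0 ^ 2 + 0 then (-1 : ℤ) ^ (0 + 1) else 0) = -1 := by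
    rw [Finset.sum_eq_single 0]
    · norm_num
    · intro b hb hb0
      rw [if_neg]
      push_neg
      norm_num
      omega
    · intro h
      exact absurd (Finset.mem_range.mpr (by omega)) h
  rw [h0, Finset.sum_congr rfl (fun k hk => inner_eval n k (Finset.mem_Ico.mp hk).1)]
  have hdist : ∀ k ∈ Finset.Ico 1 (2 * n + 2),
      (-1 : ℤ) ^ (k + 1) *
          ((if 3 * k ^ 2 - k ≤ 2 * n then (1:ℤ) else 0) + (if 3 * k ^ 2 + k ≤ 2 * n then 1 else 0))
        = (-1 : ℤ) ^ (k + 1) * (if 3 * k ^ 2 - k ≤ 2 * n then (1:ℤ) else 0)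
          + (-1 : ℤ) ^ (k + 1) * (if 3 * k ^ 2 + k ≤ 2 * n then (1:ℤ) else 0) := by
    intro k _; ring
  rw [Finset.sum_congr rfl hdist, Finset.sum_add_distrib]
  -- first sum
  set P : ℕ → Prop := fun k => 3 * k ^ 2 - k ≤ 2 * n with hP
  set Q : ℕ → Prop := fun k => 3 * k ^ 2 + k ≤ 2 * n with hQ
  set M1 := Nat.findGreatest P (2 * n + 1) with hM1
  set M2 := Nat.findGreatest Q (2 * n + 1) with hM2
  have hPM : P M1 := Nat.findGreatest_spec (Nat.zero_le _) (by simp [hP])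
  have hQM : Q M2 := Nat.findGreatest_spec (Nat.zero_le _) (by simp [hQ])
  have hiff1 : ∀ k ∈ Finset.Ico 1 (2 * n + 2),
      (if 3 * k ^ 2 - k ≤ 2 * n then (1:ℤ) else 0) = (if k ≤ M1 then 1 else 0) := by
    intro k hk
    simp only [Finset.mem_Ico] at hk
    congr 1
    simp only [eq_iff_iff]
    constructor
    · intro h
      exact Nat.le_findGreatest (by omega) h
    · intro h
      exact le_trans (pent_mono k M1 h) hPM
  have hiff2 : ∀ k ∈ Finset.Ico 1 (2 * n + 2),
      (if 3 * k ^ 2 + k ≤ 2 * n then (1:ℤ) else 0) = (if k ≤ M2 then 1 else 0) := by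
    intro k hk
    simp only [Finset.mem_Ico] at hk
    congr 1
    simp only [eq_iff_iff]
    constructor
    · intro h
      exact Nat.le_findGreatest (by omega) h
    · intro h
      have h1 : 3 * k ^ 2 ≤ 3 * M2 ^ 2 := by
        have := Nat.pow_le_pow_left h 2; omega
      have := hQM
      simp only [hQ] at this
      omega
  have e1 : ∑ k ∈ Finset.Ico 1 (2 * n + 2),
      (-1 : ℤ) ^ (k + 1) * (if 3 * k ^ 2 - k ≤ 2 * n then (1:ℤ) else 0)
      = ((min (2 * n + 2 - 1) M1 % 2 : ℕ) : ℤ) := by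
    rw [Finset.sum_congr rfl (fun k hk => by rw [hiff1 k hk]), alt_sum M1 (2 * n + 2)]
  have e2 : ∑ k ∈ Finset.Ico 1 (2 * n + 2),
      (-1 : ℤ) ^ (k + 1) * (if 3 * k ^ 2 + k ≤ 2 * n then (1:ℤ) else 0)
      = ((min (2 * n + 2 - 1) M2 % 2 : ℕ) : ℤ) := by
    rw [Finset.sum_congr rfl (fun k hk => by rw [hiff2 k hk]), alt_sum M2 (2 * n + 2)]
  rw [e1, e2]
  have m1 := Nat.mod_two_eq_zero_or_one (min (2 * n + 2 - 1) M1)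
  have m2 := Nat.mod_two_eq_zero_or_one (min (2 * n + 2 - 1) M2)
  simp only [Set.mem_insert_iff, Set.mem_singleton_iff]
  rcases m1 with h1 | h1 <;> rcases m2 with h2 | h2 <;> rw [h1, h2] <;> norm_num
end

section
/- For every natural number n, f(n) = e(n) if and only if n = 0 or there exists a positive integer m with (3m² − m)/2 < n ≤ (3m² + m)/2. -/
lemma k_le (k : ℕ) : k ≤ 3 * k ^ 2 := by
  have := Nat.le_self_pow two_ne_zero k; omega

lemma par (m : ℕ) : 2 ∣ m ^ 2 + m := by
  obtain ⟨t, ht⟩ := Nat.even_mul_succ_self m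
  have h2 : m * (m + 1) = m ^ 2 + m := by ring
  omega

lemma e_zero_of (n : ℕ) (h : ∀ k, 2*n + k ≠ 3*k^2 ∧ 2*n ≠ 3*k^2 + k) : e n = 0 := by
  apply Finset.sum_eq_zero; intro k _
  rw [if_neg]; rintro (h1 | h2)
  · have := k_le k; exact (h k).1 (by omega)
  · exact (h k).2 h2

lemma e_single (n k0 : ℕ) (hlt : k0 < 2*n+2)
    (hk0 : 2*n + k0 = 3*k0^2 ∨ 2*n = 3*k0^2 + k0)
    (hu : ∀ k, 2*n + k = 3*k^2 ∨ 2*n = 3*k^2 + k → k = k0) :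
    e n = (-1)^(k0+1) := by
  unfold e
  rw [Finset.sum_eq_single_of_mem k0 (Finset.mem_range.mpr hlt)]
  · rw [if_pos]
    rcases hk0 with h | h
    · left; have := k_le k0; omega
    · right; exact h
  · intro b _ hb; rw [if_neg]; rintro (h1 | h2)
    · exact hb (hu b (Or.inl (by have := k_le b; omega)))
    · exact hb (hu b (Or.inr h2))

lemma no_sol_zero (m x k : ℕ) (h1 : 3*m^2 < 2*x + m) (h2 : 2*x < 3*m^2 + m) :
    2*x + k ≠ 3*k^2 ∧ 2*x ≠ 3*k^2 + k := by
  have hm1 : 1 ≤ m := by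
    rcases Nat.eq_zero_or_pos m with rfl | h
    · simp at h1 h2
    · exact h
  constructor
  · intro h
    rcases le_or_gt k m with hk | hk
    · have := Nat.pow_le_pow_left hk 2; nlinarith
    · have hk' : m + 1 ≤ k := hk
      have := Nat.pow_le_pow_left hk' 2; nlinarith
  · intro h
    rcases le_or_gt m k with hk | hk
    · have := Nat.pow_le_pow_left hk 2; nlinarith
    · have hk' : k + 1 ≤ m := hk
      have := Nat.pow_le_pow_left hk' 2; nlinarith

lemma no_sol_sign (m x k : ℕ) (h1 : 3*m^2 + m < 2*x) (h2 : 2*x + m + 1 < 3*(m+1)^2) :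
    2*x + k ≠ 3*k^2 ∧ 2*x ≠ 3*k^2 + k := by
  constructor
  · intro h
    rcases le_or_gt k m with hk | hk
    · have := Nat.pow_le_pow_left hk 2; nlinarith
    · have hk' : m + 1 ≤ k := hk
      have := Nat.pow_le_pow_left hk' 2; nlinarith
  · intro h
    rcases le_or_gt k m with hk | hk
    · have := Nat.pow_le_pow_left hk 2; nlinarith
    · have hk' : m + 1 ≤ k := hk
      have := Nat.pow_le_pow_left hk' 2; nlinarith

lemma uniq_minus (m x k : ℕ) (hm : 1 ≤ m) (hx : 2*x + m = 3*m^2)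
    (h : 2*x + k = 3*k^2 ∨ 2*x = 3*k^2 + k) : k = m := by
  rcases h with h | h
  · rcases lt_trichotomy k m with hk | hk | hk
    · have hk' : k + 1 ≤ m := hk
      have := Nat.pow_le_pow_left hk' 2; nlinarith
    · exact hk
    · have hk' : m + 1 ≤ k := hk
      have := Nat.pow_le_pow_left hk' 2; nlinarith
  · exfalso
    rcases le_or_gt m k with hk | hk
    · have := Nat.pow_le_pow_left hk 2; nlinarith
    · have hk' : k + 1 ≤ m := hk
      have := Nat.pow_le_pow_left hk' 2; nlinarith

lemma uniq_plus (m x k : ℕ) (hm : 1 ≤ m) (hx : 2*x = 3*m^2 + m)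
    (h : 2*x + k = 3*k^2 ∨ 2*x = 3*k^2 + k) : k = m := by
  rcases h with h | h
  · exfalso
    rcases le_or_gt k m with hk | hk
    · have := Nat.pow_le_pow_left hk 2; nlinarith
    · have hk' : m + 1 ≤ k := hk
      have := Nat.pow_le_pow_left hk' 2; nlinarith
  · rcases lt_trichotomy k m with hk | hk | hk
    · have hk' : k + 1 ≤ m := hk
      have := Nat.pow_le_pow_left hk' 2; nlinarith
    · exact hk
    · have hk' : m + 1 ≤ k := hk
      have := Nat.pow_le_pow_left hk' 2; nlinarith

lemma f_succ (n : ℕ) : f (n + 1) = f n + e (n + 1) := Finset.sum_range_succ e (n + 1)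

lemma master (n : ℕ) : ∃ m : ℕ,
    (3*m^2 ≤ 2*n + m ∧ 2*n < 3*m^2 + m ∧ f n = 0) ∨
    (3*m^2 + m ≤ 2*n ∧ 2*n + m + 1 < 3*(m+1)^2 ∧ f n = (-1)^(m+1)) := by
  induction n with
  | zero =>
    refine ⟨0, Or.inr ⟨by norm_num, by norm_num, ?_⟩⟩
    show f 0 = -1
    have h0 : f 0 = e 0 := by simp [f]
    rw [h0]; decide
  | succ n ih =>
    obtain ⟨m, hA | hB⟩ := ih
    · obtain ⟨ha1, ha2, ha3⟩ := hA
      have hm1 : 1 ≤ m := by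
        rcases Nat.eq_zero_or_pos m with rfl | h
        · simp at ha1 ha2
        · exact h
      by_cases hc : 2*(n+1) = 3*m^2 + m
      · refine ⟨m, Or.inr ⟨le_of_eq hc.symm, ?_, ?_⟩⟩
        · have : (m+1)^2 = m^2 + 2*m + 1 := by ring
          omega
        · rw [f_succ, ha3, zero_add]
          apply e_single (n+1) m
          · have := k_le m; omega
          · right; omega
          · intro k hk
            exact uniq_plus m (n+1) k hm1 (by omega) hk
      · have hp := par m
        have hlt : 2*(n+1) < 3*m^2 + m := by omega
        refine ⟨m, Or.inl ⟨by omega, hlt, ?_⟩⟩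
        rw [f_succ, ha3, zero_add]
        apply e_zero_of
        intro k
        exact no_sol_zero m (n+1) k (by omega) hlt
    · obtain ⟨hb1, hb2, hb3⟩ := hB
      by_cases hc : 2*(n+1) + (m+1) = 3*(m+1)^2
      · refine ⟨m+1, Or.inl ⟨le_of_eq hc.symm, by omega, ?_⟩⟩
        rw [f_succ, hb3]
        have he : e (n+1) = (-1)^(m+1+1) := by
          apply e_single (n+1) (m+1)
          · have := k_le (m+1); omega
          · left; omega
          · intro k hk
            exact uniq_minus (m+1) (n+1) k (by omega) (by omega) hk
        rw [he]
        simp [pow_succ]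
      · have hp := par (m+1)
        have hlt : 2*(n+1) + m + 1 < 3*(m+1)^2 := by omega
        refine ⟨m, Or.inr ⟨by omega, hlt, ?_⟩⟩
        rw [f_succ, hb3]
        have he : e (n+1) = 0 := by
          apply e_zero_of
          intro k
          exact no_sol_sign m (n+1) k (by omega) hlt
        rw [he, add_zero]

lemma mono2 (a b : ℕ) (h : a ≤ b) : 3*a^2 + b ≤ 3*b^2 + a := by
  have := Nat.pow_le_pow_left h 2
  nlinarith

lemma zchar (n : ℕ) : f n = 0 ↔ ∃ m : ℕ, 1 ≤ m ∧ 3*m^2 ≤ 2*n + m ∧ 2*n < 3*m^2 + m := by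
  constructor
  · intro h
    obtain ⟨m, hA | hB⟩ := master n
    · obtain ⟨ha1, ha2, _⟩ := hA
      have hm1 : 1 ≤ m := by
        rcases Nat.eq_zero_or_pos m with rfl | hh
        · simp at ha1 ha2
        · exact hh
      exact ⟨m, hm1, ha1, ha2⟩
    · exfalso
      have : ((-1 : ℤ))^(m+1) ≠ 0 := pow_ne_zero _ (by norm_num)
      rw [hB.2.2] at h
      exact this h
  · rintro ⟨m, hm, h1, h2⟩
    obtain ⟨m', hA | hB⟩ := master n
    · exact hA.2.2
    · exfalso
      obtain ⟨hb1, hb2, _⟩ := hB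
      rcases le_or_gt m m' with hk | hk
      · have := mono2 m m' hk; omega
      · have hk' : m' + 1 ≤ m := hk
        have := mono2 (m'+1) m hk'; omega

theorem f_eq_e_iff (n : ℕ) :
    f n = e n ↔ n = 0 ∨ ∃ m : ℕ, 0 < m ∧ (3 * m ^ 2 - m) / 2 < n ∧ n ≤ (3 * m ^ 2 + m) / 2 := by
  cases n with
  | zero =>
    constructor
    · intro _; left; rfl
    · intro _; simp [f, Finset.sum_range_one]
  | succ N =>
    have hf := f_succ N
    have key : f (N+1) = e (N+1) ↔ f N = 0 := by constructor <;> intro h <;> omega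
    rw [key, zchar N]
    constructor
    · rintro ⟨m, hm, h1, h2⟩
      right
      refine ⟨m, hm, ?_, ?_⟩ <;>
      · have hp := par m; have hk := k_le m; omega
    · rintro (h0 | ⟨m, hm, h1, h2⟩)
      · exact absurd h0 (by omega)
      · refine ⟨m, hm, ?_, ?_⟩ <;>
        · have hp := par m; have hk := k_le m; omega
end

section
/- For every natural number n ≥ 1, n·p(n) = Σ_{k=1}^{n} σ(k)·p(n−k). -/
/-- The sum of the positive divisors of `k`. -/
def sigma (k : ℕ) : ℕ := ∑ d ∈ k.divisors, d

open Finset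

/-- Partitions of `n` containing at least `m` copies of `d` are in bijection with
partitions of `n - d * m`. -/
def partEquiv (n d m : ℕ) (hd : 0 < d) (hdm : d * m ≤ n) :
    {l : Nat.Partition n // Multiset.replicate m d ≤ l.parts} ≃ Nat.Partition (n - d * m) where
  toFun l := ⟨l.1.parts - Multiset.replicate m d,
    fun {i} hi => l.1.parts_pos (Multiset.mem_of_le (Multiset.sub_le_self _ _) hi),
    by
      have h : (l.1.parts - Multiset.replicate m d).sum + (Multiset.replicate m d).sum
          = l.1.parts.sum := by
        rw [← Multiset.sum_add, tsub_add_cancel_of_le l.2]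
      rw [Multiset.sum_replicate, smul_eq_mul, mul_comm m d] at h
      have h2 := l.1.parts_sum
      omega⟩
  invFun μ := ⟨⟨μ.parts + Multiset.replicate m d,
    by
      intro i hi
      rcases Multiset.mem_add.1 hi with h | h
      · exact μ.parts_pos h
      · rwa [Multiset.eq_of_mem_replicate h],
    by
      rw [Multiset.sum_add, Multiset.sum_replicate, smul_eq_mul, mul_comm m d, μ.parts_sum]
      omega⟩,
    Multiset.le_add_left _ _⟩
  left_inv l := by
    apply Subtype.ext
    apply Nat.Partition.ext
    exact tsub_add_cancel_of_le l.2
  right_inv μ := by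
    apply Nat.Partition.ext
    exact add_tsub_cancel_right _ _

lemma card_filter_replicate (n d m : ℕ) (hd : 0 < d) (hdm : d * m ≤ n) :
    (Finset.univ.filter (fun l : Nat.Partition n => Multiset.replicate m d ≤ l.parts)).card
      = p (n - d * m) := by
  rw [p, Nat.card_eq_fintype_card, ← Fintype.card_congr (partEquiv n d m hd hdm),
    Fintype.card_subtype]

theorem sigma_partition_recurrence (n : ℕ) (hn : 1 ≤ n) :
    n * p n = ∑ k ∈ Finset.Icc 1 n, sigma k * p (n - k) := by
  classical
  set S : Finset (ℕ × ℕ) :=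
    ((Icc 1 n) ×ˢ (Icc 1 n)).filter (fun q : ℕ × ℕ => q.1 * q.2 ≤ n) with hS
  -- RHS equals sum over pairs
  have hmaps : ∀ q ∈ S, q.1 * q.2 ∈ Icc 1 n := by
    intro q hq
    simp only [hS, mem_filter, mem_product, mem_Icc] at hq
    simp only [mem_Icc]
    exact ⟨Nat.one_le_iff_ne_zero.2 (Nat.mul_ne_zero (by omega) (by omega)), hq.2⟩
  have hRHS : ∑ k ∈ Icc 1 n, sigma k * p (n - k)
      = ∑ q ∈ S, q.1 * p (n - q.1 * q.2) := by
    rw [← Finset.sum_fiberwise_of_maps_to hmaps (fun q : ℕ × ℕ => q.1 * p (n - q.1 * q.2))]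
    refine Finset.sum_congr rfl fun k hk => ?_
    rw [mem_Icc] at hk
    have hfilter : S.filter (fun q : ℕ × ℕ => q.1 * q.2 = k) = k.divisorsAntidiagonal := by
      ext ⟨d, m⟩
      simp only [hS, mem_filter, mem_product, mem_Icc, Nat.mem_divisorsAntidiagonal]
      constructor
      · rintro ⟨⟨⟨_, _⟩, _⟩, h⟩
        exact ⟨h, by omega⟩
      · rintro ⟨h, -⟩
        have hd : 0 < d := Nat.pos_of_ne_zero (by rintro rfl; omega)
        have hm : 0 < m := Nat.pos_of_ne_zero (by rintro rfl; simp at h; omega)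
        have hdk : d ≤ k := h ▸ Nat.le_mul_of_pos_right d hm
        have hmk : m ≤ k := h ▸ Nat.le_mul_of_pos_left m hd
        exact ⟨⟨⟨⟨hd, by omega⟩, ⟨hm, by omega⟩⟩, by omega⟩, h⟩
    rw [hfilter]
    have : ∀ q ∈ k.divisorsAntidiagonal, q.1 * p (n - q.1 * q.2) = q.1 * p (n - k) := by
      intro q hq
      rw [(Nat.mem_divisorsAntidiagonal.1 hq).1]
    rw [Finset.sum_congr rfl this, ← Finset.sum_mul, sigma]
    congr 1
    exact (Nat.sum_divisorsAntidiagonal (fun d _ => d)).symm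
  -- each partition's parts-sum expands as indicator sums
  have key : ∀ l : Nat.Partition n, l.parts.sum
      = ∑ q ∈ (Icc 1 n) ×ˢ (Icc 1 n),
          (if Multiset.replicate q.2 q.1 ≤ l.parts then q.1 else 0) := by
    intro l
    have hsub : l.parts.toFinset ⊆ Icc 1 n := by
      intro x hx
      rw [Multiset.mem_toFinset] at hx
      rw [mem_Icc]
      refine ⟨l.parts_pos hx, ?_⟩
      calc x ≤ l.parts.sum := Multiset.single_le_sum (fun y _ => Nat.zero_le y) x hx
        _ = n := l.parts_sum
    have h1 : l.parts.sum = ∑ d ∈ Icc 1 n, Multiset.count d l.parts * d := by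
      have := sum_multiset_map_count l.parts (id : ℕ → ℕ)
      rw [Multiset.map_id] at this
      rw [this]
      refine Finset.sum_subset hsub fun x _ hx => ?_
      rw [Multiset.mem_toFinset] at hx
      simp [Multiset.count_eq_zero_of_notMem hx]
    rw [h1, Finset.sum_product]
    refine Finset.sum_congr rfl fun d hd => ?_
    have hcle : Multiset.count d l.parts ≤ n := by
      calc Multiset.count d l.parts ≤ Multiset.card l.parts := Multiset.count_le_card _ _
        _ = Multiset.card l.parts • 1 := by simp
        _ ≤ l.parts.sum := Multiset.card_nsmul_le_sum fun x hx => l.parts_pos hx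
        _ = n := l.parts_sum
    have : ∑ m ∈ Icc 1 n, (if Multiset.replicate m d ≤ l.parts then d else 0)
        = ∑ m ∈ (Icc 1 n).filter (fun m => Multiset.replicate m d ≤ l.parts), d :=
      (Finset.sum_filter _ _).symm
    rw [this]
    have hfil : (Icc 1 n).filter (fun m => Multiset.replicate m d ≤ l.parts)
        = Icc 1 (Multiset.count d l.parts) := by
      ext m
      simp only [mem_filter, mem_Icc, ← Multiset.le_count_iff_replicate_le]
      omega
    rw [hfil, Finset.sum_const, Nat.card_Icc, smul_eq_mul, Nat.add_sub_cancel]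
  -- assemble
  calc n * p n = ∑ _l : Nat.Partition n, n := by
        rw [Finset.sum_const, p, Nat.card_eq_fintype_card, card_univ, smul_eq_mul, mul_comm]
    _ = ∑ l : Nat.Partition n, l.parts.sum := by
        refine Finset.sum_congr rfl fun l _ => ?_
        exact l.parts_sum.symm
    _ = ∑ l : Nat.Partition n, ∑ q ∈ (Icc 1 n) ×ˢ (Icc 1 n),
          (if Multiset.replicate q.2 q.1 ≤ l.parts then q.1 else 0) :=
        Finset.sum_congr rfl fun l _ => key l
    _ = ∑ q ∈ (Icc 1 n) ×ˢ (Icc 1 n), ∑ l : Nat.Partition n,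
          (if Multiset.replicate q.2 q.1 ≤ l.parts then q.1 else 0) := Finset.sum_comm
    _ = ∑ q ∈ (Icc 1 n) ×ˢ (Icc 1 n),
          (if q.1 * q.2 ≤ n then q.1 * p (n - q.1 * q.2) else 0) := by
        refine Finset.sum_congr rfl fun q hq => ?_
        rw [mem_product, mem_Icc, mem_Icc] at hq
        have hsum : ∑ l : Nat.Partition n,
            (if Multiset.replicate q.2 q.1 ≤ l.parts then q.1 else 0)
            = (Finset.univ.filter
                (fun l : Nat.Partition n => Multiset.replicate q.2 q.1 ≤ l.parts)).card * q.1 := by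
          rw [← Finset.sum_filter, Finset.sum_const, smul_eq_mul]
        rw [hsum]
        by_cases h : q.1 * q.2 ≤ n
        · rw [if_pos h, card_filter_replicate n q.1 q.2 (by omega) h, mul_comm]
        · rw [if_neg h]
          convert Nat.zero_mul q.1
          rw [Finset.card_eq_zero, Finset.filter_eq_empty_iff]
          intro l _ hle
          obtain ⟨u, hu⟩ := Multiset.le_iff_exists_add.1 hle
          have : (Multiset.replicate q.2 q.1).sum ≤ l.parts.sum := by
            rw [hu, Multiset.sum_add]; exact Nat.le_add_right _ _
          rw [Multiset.sum_replicate, smul_eq_mul, l.parts_sum, mul_comm] at this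
          omega
    _ = ∑ q ∈ S, q.1 * p (n - q.1 * q.2) := (Finset.sum_filter _ _).symm
    _ = ∑ k ∈ Icc 1 n, sigma k * p (n - k) := hRHS.symm
end

section
/- For every natural number n ≥ 1, p(n) = Σ_{k=1}^{n} e(k)·p(n−k) (Euler's pentagonal recurrence). -/
namespace EulerPent

open Multiset

def g (j : ℤ) : ℤ := j * (3 * j + 1) / 2

lemma two_mul_g (j : ℤ) : 2 * g j = 3 * j ^ 2 + j := by
  have h : (2:ℤ) ∣ j * (3 * j + 1) := by
    rcases Int.even_or_odd j with ⟨c, hc⟩ | ⟨c, hc⟩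
    · exact ⟨c * (3*j+1), by rw [hc]; ring⟩
    · exact ⟨j * (3*c+2), by rw [hc]; ring⟩
  rw [g, Int.mul_ediv_cancel' h]; ring

lemma g_zero : g 0 = 0 := rfl

lemma g_succ (j : ℤ) : g (j+1) = g j + 3*j + 2 := by
  have h1 := two_mul_g j
  have h2 := two_mul_g (j+1)
  have h3 : 3*(j+1)^2 + (j+1) = 3*j^2 + j + (6*j + 4) := by ring
  linarith

lemma g_nonneg (j : ℤ) : 0 ≤ g j := by
  have h1 := two_mul_g j
  have h2 : (0:ℤ) ≤ (6*j+1)^2 := sq_nonneg _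
  have h3 : 24 * g j ≥ -1 := by nlinarith
  omega

lemma g_bound {n : ℕ} {j : ℤ} (h : g j ≤ (n:ℤ)) : -(n:ℤ) ≤ j ∧ j ≤ n := by
  have h1 := two_mul_g j
  rcases le_or_gt 0 j with hj | hj
  · have h2 : 0 ≤ j * (j - 1) := by
      rcases eq_or_lt_of_le hj with rfl | hj1
      · simp
      · exact mul_nonneg hj (by omega)
    have h3 : j ≤ n := by nlinarith
    constructor
    · have := Int.natCast_nonneg n; omega
    · exact h3
  · have h2 : 0 ≤ (-j) * (-j - 1) := mul_nonneg (by omega) (by omega)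
    have : -j ≤ n := by nlinarith
    omega

lemma sup_mem {s : Multiset ℕ} (h : s ≠ 0) : s.sup ∈ s := by
  induction s using Multiset.induction_on with
  | empty => simp at h
  | cons a t ih =>
    rw [Multiset.sup_cons]
    rcases eq_or_ne t 0 with rfl | ht
    · simp
    · rcases le_total t.sup a with h1 | h1
      · rw [sup_eq_left.mpr h1]; exact Multiset.mem_cons_self a t
      · rw [sup_eq_right.mpr h1]; exact Multiset.mem_cons_of_mem (ih ht)

lemma card_le_sum' {s : Multiset ℕ} (h : ∀ x ∈ s, 0 < x) : s.card ≤ s.sum := by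
  induction s using Multiset.induction_on with
  | empty => simp
  | cons a t ih =>
    simp only [Multiset.card_cons, Multiset.sum_cons]
    have ha := h a (Multiset.mem_cons_self a t)
    have := ih (fun x hx => h x (Multiset.mem_cons_of_mem hx))
    omega

lemma sum_map_succ (s : Multiset ℕ) : (s.map (· + 1)).sum = s.sum + s.card := by
  induction s using Multiset.induction_on with
  | empty => simp
  | cons a t ih => simp only [Multiset.map_cons, Multiset.sum_cons, Multiset.card_cons, ih]; omega

lemma sum_map_pred (s : Multiset ℕ) (h : ∀ x ∈ s, 0 < x) :
    (s.map (· - 1)).sum = s.sum - s.card := by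
  induction s using Multiset.induction_on with
  | empty => simp
  | cons a t ih =>
    have ha := h a (Multiset.mem_cons_self a t)
    have ht := card_le_sum' (fun x hx => h x (Multiset.mem_cons_of_mem hx))
    simp only [Multiset.map_cons, Multiset.sum_cons, Multiset.card_cons,
      ih (fun x hx => h x (Multiset.mem_cons_of_mem hx))]
    omega

lemma sum_erase_sup {s : Multiset ℕ} (h : s ≠ 0) :
    (s.erase s.sup).sum = s.sum - s.sup := by
  have h1 := Multiset.cons_erase (sup_mem h)
  have h2 : s.sum = s.sup + (s.erase s.sup).sum := by
    conv_lhs => rw [← h1]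
    rw [Multiset.sum_cons]
  omega

/-- weight available at index `j`. -/
def m (n : ℕ) (j : ℤ) : ℕ := ((n:ℤ) - g j).toNat

/-- pairs (pentagonal index, partition of remaining weight) -/
abbrev X (n : ℕ) := Σ j : ℤ, Nat.Partition (m n j)

/-- build a partition from a multiset when the sum is right, else junk. -/
def mkP (k : ℕ) (l : Multiset ℕ) : Nat.Partition k :=
  if h : l.sum = k then Nat.Partition.ofSums k l h else default

lemma mkP_parts' {k : ℕ} {l : Multiset ℕ} (h : l.sum = k) :
    (mkP k l).parts = l.filter (· ≠ 0) := by
  rw [mkP, dif_pos h]; rfl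

lemma mkP_parts {k : ℕ} {l : Multiset ℕ} (h : l.sum = k) (hpos : ∀ x ∈ l, 0 < x) :
    (mkP k l).parts = l := by
  rw [mkP_parts' h]
  exact Multiset.filter_eq_self.mpr (fun x hx => by have := hpos x hx; omega)

def caseA (n : ℕ) (j : ℤ) (P : Multiset ℕ) : Multiset ℕ :=
  (P.erase P.sup).map (· + 1) +
    Multiset.replicate (m n (j+1) - ((P.erase P.sup).map (· + 1)).sum) 1

def caseB (j : ℤ) (P : Multiset ℕ) : Multiset ℕ :=
  (3*j + P.card - 1).toNat ::ₘ P.map (· - 1)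

/-- the Bressoud–Zeilberger involution. -/
def Phi (n : ℕ) : X n → X n := fun x =>
  if 3*x.1 + (Multiset.card x.2.parts : ℤ) + 1 ≤ (x.2.parts.sup : ℤ)
    then ⟨x.1 + 1, mkP _ (caseA n x.1 x.2.parts)⟩
    else ⟨x.1 - 1, mkP _ (caseB x.1 x.2.parts)⟩

lemma X_ext {n : ℕ} {i j : ℤ} {a : Nat.Partition (m n i)}
    {b : Nat.Partition (m n j)} (h : i = j) (h2 : a.parts = b.parts) : (⟨i, a⟩ : X n) = ⟨j, b⟩ := by
  subst h
  exact congrArg _ (Nat.Partition.ext h2)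


lemma filter_replicate_zero (r : ℕ) : (Multiset.replicate r (0:ℕ)).filter (· ≠ 0) = 0 := by
  rw [Multiset.filter_eq_nil]; intro a ha; simp [Multiset.eq_of_mem_replicate ha]

lemma phi_pos {n : ℕ} (j : ℤ) (lam : Nat.Partition (m n j))
    (h : 3*j + (Multiset.card lam.parts : ℤ) + 1 ≤ (lam.parts.sup : ℤ)) :
    Phi n ⟨j, lam⟩ = ⟨j + 1, mkP (m n (j+1)) (caseA n j lam.parts)⟩ := by
  dsimp only [Phi]
  rw [if_pos h]

lemma phi_neg {n : ℕ} (j : ℤ) (lam : Nat.Partition (m n j))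
    (h : ¬ (3*j + (Multiset.card lam.parts : ℤ) + 1 ≤ (lam.parts.sup : ℤ))) :
    Phi n ⟨j, lam⟩ = ⟨j - 1, mkP (m n (j-1)) (caseB j lam.parts)⟩ := by
  dsimp only [Phi]
  rw [if_neg h]

lemma m_cast {n : ℕ} {j : ℤ} (h : g j ≤ (n:ℤ)) : (m n j : ℤ) = (n:ℤ) - g j := by
  rw [m]; omega

lemma phi_step {n : ℕ} (hn : 1 ≤ n) {j : ℤ} (hg : g j ≤ (n:ℤ))
    (lam : Nat.Partition (m n j)) :
    g (Phi n ⟨j, lam⟩).1 ≤ (n:ℤ) ∧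
    ((Phi n ⟨j, lam⟩).1 = j + 1 ∨ (Phi n ⟨j, lam⟩).1 = j - 1) ∧
    Phi n (Phi n ⟨j, lam⟩) = ⟨j, lam⟩ := by
  have hpos : ∀ x ∈ lam.parts, 0 < x := fun x hx => lam.parts_pos hx
  have hpos' : ∀ x ∈ lam.parts, (0:ℕ) ≤ x := fun x _ => Nat.zero_le x
  have hsum : (lam.parts.sum : ℤ) = (n:ℤ) - g j := by
    rw [lam.parts_sum]; exact m_cast hg
  have hgs : g (j+1) = g j + 3*j + 2 := g_succ j
  have hgp : g j = g (j-1) + 3*(j-1) + 2 := by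
    have := g_succ (j-1); rw [show j - 1 + 1 = j by omega] at this; omega
  by_cases hbr : 3*j + (Multiset.card lam.parts : ℤ) + 1 ≤ (lam.parts.sup : ℤ)
  · -- Case A
    have hA := phi_pos j lam hbr
    rcases eq_or_ne lam.parts 0 with h0 | h0
    · -- empty partition, j ≤ -1
      rw [h0] at hbr
      simp only [Multiset.card_zero, Multiset.sup_zero, Nat.cast_zero,
        Nat.bot_eq_zero] at hbr
      have hj1 : j ≤ -1 := by omega
      have hS0 : lam.parts.sum = 0 := by rw [h0]; simp
      have hg' : g (j+1) ≤ (n:ℤ) := by omega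
      have hm' : (m n (j+1) : ℤ) = (n:ℤ) - g (j+1) := m_cast hg'
      have hR : 1 ≤ m n (j+1) := by omega
      have hcA : caseA n j lam.parts = Multiset.replicate (m n (j+1)) 1 := by
        rw [caseA, h0]; simp
      have hcAsum : (caseA n j lam.parts).sum = m n (j+1) := by
        rw [hcA]; simp
      have hYparts : (mkP (m n (j+1)) (caseA n j lam.parts)).parts
          = Multiset.replicate (m n (j+1)) 1 := by
        rw [mkP_parts hcAsum (by
          intro x hx; rw [hcA] at hx
          have := Multiset.eq_of_mem_replicate hx; omega), hcA]
      refine ⟨by rw [hA]; exact hg', by rw [hA]; exact Or.inl rfl, ?_⟩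
      rw [hA]
      have hsup1 : ((mkP (m n (j+1)) (caseA n j lam.parts)).parts.sup : ℤ) ≤ 1 := by
        rw [hYparts]
        have : (Multiset.replicate (m n (j+1)) 1).sup ≤ 1 :=
          Multiset.sup_le.mpr (fun b hb => le_of_eq (Multiset.eq_of_mem_replicate hb))
        exact_mod_cast this
      have hcard1 : (Multiset.card (mkP (m n (j+1)) (caseA n j lam.parts)).parts : ℤ)
          = (m n (j+1) : ℤ) := by rw [hYparts]; simp
      have hB := phi_neg (j+1) (mkP (m n (j+1)) (caseA n j lam.parts)) (by
        rw [hcard1]; omega)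
      rw [hB]
      apply X_ext (by omega)
      have h1 : (3*(j+1) +
          (Multiset.card (mkP (m n (j+1)) (caseA n j lam.parts)).parts : ℤ) - 1).toNat
          = 0 := by rw [hcard1]; omega
      have hsumB : (caseB (j+1) (mkP (m n (j+1)) (caseA n j lam.parts)).parts).sum
          = m n (j+1-1) := by
        rw [caseB, h1, hYparts, Multiset.map_replicate]
        have : (m n (j+1-1) : ℤ) = 0 := by
          rw [show j+1-1 = j by omega, m_cast hg]; omega
        simp only [Multiset.sum_cons, Multiset.sum_replicate, smul_eq_mul, mul_zero]
        omega
      rw [mkP_parts' hsumB, caseB, h1, hYparts, Multiset.map_replicate]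
      rw [Multiset.filter_cons_of_neg _ (by simp)]
      rw [show (1:ℕ) - 1 = 0 from rfl, filter_replicate_zero, h0]
    · -- nonempty partition
      have hmem : lam.parts.sup ∈ lam.parts := sup_mem h0
      have ha1 : 1 ≤ lam.parts.sup := hpos _ hmem
      have haS : lam.parts.sup ≤ lam.parts.sum := Multiset.single_le_sum hpos' _ hmem
      have ht1 : 1 ≤ Multiset.card lam.parts := by
        rw [Nat.one_le_iff_ne_zero]; simpa using h0
      have hcardE : Multiset.card (lam.parts.erase lam.parts.sup)
          = Multiset.card lam.parts - 1 := by rw [Multiset.card_erase_of_mem hmem]; rfl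
      have hsumE : (lam.parts.erase lam.parts.sup).sum = lam.parts.sum - lam.parts.sup :=
        sum_erase_sup h0
      have hTsum : ((lam.parts.erase lam.parts.sup).map (· + 1)).sum
          = lam.parts.sum - lam.parts.sup + (Multiset.card lam.parts - 1) := by
        rw [sum_map_succ, hsumE, hcardE]
      have hg' : g (j+1) ≤ (n:ℤ) := by omega
      have hm' : (m n (j+1) : ℤ) = (n:ℤ) - g (j+1) := m_cast hg'
      have hkey : ((((lam.parts.erase lam.parts.sup).map (· + 1)).sum : ℕ) : ℤ)
          ≤ (n:ℤ) - g (j+1) := by omega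
      have hcAsum : (caseA n j lam.parts).sum = m n (j+1) := by
        rw [caseA, Multiset.sum_add, Multiset.sum_replicate, smul_eq_mul, mul_one]
        omega
      have hcApos : ∀ x ∈ caseA n j lam.parts, 0 < x := by
        intro x hx
        rw [caseA, Multiset.mem_add] at hx
        rcases hx with hx | hx
        · rcases Multiset.mem_map.mp hx with ⟨y, _, rfl⟩; omega
        · rw [Multiset.eq_of_mem_replicate hx]; omega
      have hYparts : (mkP (m n (j+1)) (caseA n j lam.parts)).parts = caseA n j lam.parts :=
        mkP_parts hcAsum hcApos
      refine ⟨by rw [hA]; exact hg', by rw [hA]; exact Or.inl rfl, ?_⟩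
      rw [hA]
      have hcardY : (Multiset.card (caseA n j lam.parts) : ℤ)
          = (lam.parts.sup : ℤ) - 3*j - 2 := by
        rw [caseA, Multiset.card_add, Multiset.card_map, Multiset.card_replicate, hcardE]
        omega
      have hsupY : ((caseA n j lam.parts).sup : ℤ) ≤ (lam.parts.sup : ℤ) + 1 := by
        have h2 : (caseA n j lam.parts).sup ≤ lam.parts.sup + 1 := by
          apply Multiset.sup_le.mpr
          intro b hb
          rw [caseA, Multiset.mem_add] at hb
          rcases hb with hb | hb
          · rcases Multiset.mem_map.mp hb with ⟨y, hy, rfl⟩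
            have : y ≤ lam.parts.sup :=
              Multiset.le_sup (Multiset.mem_of_mem_erase hy)
            omega
          · rw [Multiset.eq_of_mem_replicate hb]; omega
        exact_mod_cast h2
      have hB := phi_neg (j+1) (mkP (m n (j+1)) (caseA n j lam.parts)) (by
        rw [hYparts]; omega)
      rw [hB]
      apply X_ext (by omega)
      simp only [hYparts]
      have hM : (3*(j+1) + (Multiset.card (caseA n j lam.parts) : ℤ) - 1).toNat
          = lam.parts.sup := by omega
      have hmapcA : (caseA n j lam.parts).map (· - 1)
          = lam.parts.erase lam.parts.sup +
            Multiset.replicate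
              (m n (j+1) - ((lam.parts.erase lam.parts.sup).map (· + 1)).sum) 0 := by
        rw [caseA, Multiset.map_add, Multiset.map_map, Multiset.map_replicate]
        congr 1
        have h3 : ((· - 1) ∘ (· + 1) : ℕ → ℕ) = id := by funext x; simp
        rw [h3, Multiset.map_id]
      have hsumB : (caseB (j+1) (caseA n j lam.parts)).sum = m n (j+1-1) := by
        rw [caseB, hM, Multiset.sum_cons, hmapcA, Multiset.sum_add, Multiset.sum_replicate,
          smul_eq_mul, mul_zero, Nat.add_zero, hsumE]
        have h4 : (m n (j+1-1) : ℤ) = (lam.parts.sum : ℤ) := by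
          rw [show j+1-1 = j by omega, m_cast hg]; omega
        omega
      rw [mkP_parts' hsumB, caseB, hM, hmapcA]
      rw [Multiset.filter_cons_of_pos _ (by simp; omega)]
      rw [Multiset.filter_add, filter_replicate_zero, add_zero]
      rw [Multiset.filter_eq_self.mpr (fun x hx => by
        have := hpos x (Multiset.mem_of_mem_erase hx); omega)]
      exact Multiset.cons_erase hmem
  · -- Case B
    have hB := phi_neg j lam hbr
    have hSt : Multiset.card lam.parts ≤ lam.parts.sum := card_le_sum' hpos
    have ha1' : lam.parts ≠ 0 → 1 ≤ lam.parts.sup := fun h0 => hpos _ (sup_mem h0)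
    have htj : Multiset.card lam.parts = 0 → 1 ≤ j := by
      intro ht0
      have h0 : lam.parts = 0 := Multiset.card_eq_zero.mp ht0
      have hS0 : lam.parts.sum = 0 := by rw [h0]; simp
      rw [h0] at hbr
      simp only [Multiset.card_zero, Multiset.sup_zero, Nat.cast_zero,
        Nat.bot_eq_zero] at hbr
      have hgj : g j = (n:ℤ) := by omega
      have : g 0 = 0 := g_zero
      have hjne : j ≠ 0 := by rintro rfl; omega
      omega
    have hMZ : (0:ℤ) ≤ 3*j + (Multiset.card lam.parts : ℤ) - 1 := by
      rcases Nat.eq_zero_or_pos (Multiset.card lam.parts) with ht0 | ht0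
      · have := htj ht0; omega
      · have h0 : lam.parts ≠ 0 := by
          intro h; rw [h] at ht0; simp at ht0
        have := ha1' h0; omega
    have hg'' : g (j-1) ≤ (n:ℤ) := by omega
    have hm'' : (m n (j-1) : ℤ) = (n:ℤ) - g (j-1) := m_cast hg''
    have hsumBsm : (caseB j lam.parts).sum = m n (j-1) := by
      rw [caseB, Multiset.sum_cons, sum_map_pred _ hpos]
      omega
    have hYp : (mkP (m n (j-1)) (caseB j lam.parts)).parts
        = (caseB j lam.parts).filter (· ≠ 0) := mkP_parts' hsumBsm
    refine ⟨by rw [hB]; exact hg'', by rw [hB]; exact Or.inr rfl, ?_⟩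
    rw [hB]
    by_cases hM0 : 3*j + (Multiset.card lam.parts : ℤ) - 1 = 0
    · -- new head is zero: old partition was all ones
      have ht1 : 1 ≤ Multiset.card lam.parts := by
        by_contra h
        have ht0 : Multiset.card lam.parts = 0 := by omega
        have := htj ht0; omega
      have h0 : lam.parts ≠ 0 := by
        intro h; rw [h] at ht1; simp at ht1
      have ha1 := ha1' h0
      have hsa : (lam.parts.sup : ℤ) ≤ 1 := by omega
      have hrepl : lam.parts = Multiset.replicate (Multiset.card lam.parts) 1 := by
        apply Multiset.eq_replicate_card.mpr
        intro b hb
        have hb1 := hpos b hb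
        have hb2 : b ≤ lam.parts.sup := Multiset.le_sup hb
        omega
      have hcB : caseB j lam.parts
          = 0 ::ₘ Multiset.replicate (Multiset.card lam.parts) 0 := by
        rw [caseB, show (3*j + (Multiset.card lam.parts : ℤ) - 1).toNat = 0 by omega]
        congr 1
        conv_lhs => rw [hrepl]
        rw [Multiset.map_replicate]
      have hYp0 : (mkP (m n (j-1)) (caseB j lam.parts)).parts = 0 := by
        rw [hYp, hcB, Multiset.filter_cons_of_neg _ (by simp), filter_replicate_zero]
      have hA2 := phi_pos (j-1) (mkP (m n (j-1)) (caseB j lam.parts)) (by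
        rw [hYp0]
        simp only [Multiset.card_zero, Multiset.sup_zero, Nat.cast_zero, Nat.bot_eq_zero]
        omega)
      rw [hA2]
      apply X_ext (by omega)
      have hmj : m n (j-1+1) = lam.parts.sum := by
        have : (m n (j-1+1) : ℤ) = (lam.parts.sum : ℤ) := by
          rw [show j-1+1 = j by omega, m_cast hg]; omega
        omega
      have hcA2 : caseA n (j-1) (mkP (m n (j-1)) (caseB j lam.parts)).parts
          = Multiset.replicate (m n (j-1+1)) 1 := by
        rw [caseA, hYp0]; simp
      have hcA2sum : (caseA n (j-1) (mkP (m n (j-1)) (caseB j lam.parts)).parts).sum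
          = m n (j-1+1) := by rw [hcA2]; simp
      rw [mkP_parts hcA2sum (by
        intro x hx; rw [hcA2] at hx
        have := Multiset.eq_of_mem_replicate hx; omega), hcA2, hmj]
      have hsum_t : lam.parts.sum = Multiset.card lam.parts := by
        conv_lhs => rw [hrepl]
        rw [Multiset.sum_replicate, smul_eq_mul, mul_one]
      conv_rhs => rw [hrepl]
      rw [hsum_t]
    · -- new head is positive
      have hM1 : (1:ℤ) ≤ 3*j + (Multiset.card lam.parts : ℤ) - 1 := by omega
      have hfilt : (caseB j lam.parts).filter (· ≠ 0)
          = (3*j + (Multiset.card lam.parts : ℤ) - 1).toNat ::ₘ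
            (lam.parts.filter (fun x => 1 < x)).map (· - 1) := by
        rw [caseB, Multiset.filter_cons_of_pos _ (by simp; omega)]
        congr 1
        rw [Multiset.filter_map]
        congr 1
        apply Multiset.filter_congr
        intro x hx
        have := hpos x hx
        constructor
        · intro h; simp only [Function.comp] at h; omega
        · intro h; simp only [Function.comp]; omega
      have hsplit := Multiset.filter_add_not (fun x => 1 < x) lam.parts
      have hones : lam.parts.filter (fun x => ¬ 1 < x)
          = Multiset.replicate (Multiset.card (lam.parts.filter (fun x => ¬ 1 < x))) 1 := by
        apply Multiset.eq_replicate_card.mpr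
        intro b hb
        have h1 := Multiset.of_mem_filter hb
        have h2 := hpos b (Multiset.mem_of_mem_filter hb)
        omega
      have hcards : Multiset.card (lam.parts.filter (fun x => 1 < x)) +
          Multiset.card (lam.parts.filter (fun x => ¬ 1 < x)) = Multiset.card lam.parts := by
        rw [← Multiset.card_add, hsplit]
      have hsums : (lam.parts.filter (fun x => 1 < x)).sum +
          Multiset.card (lam.parts.filter (fun x => ¬ 1 < x)) = lam.parts.sum := by
        conv_rhs => rw [← hsplit]
        rw [Multiset.sum_add]
        congr 1
        conv_rhs => rw [hones]
        rw [Multiset.sum_replicate, smul_eq_mul, mul_one]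
      have hYpp : (mkP (m n (j-1)) (caseB j lam.parts)).parts
          = (3*j + (Multiset.card lam.parts : ℤ) - 1).toNat ::ₘ
            (lam.parts.filter (fun x => 1 < x)).map (· - 1) := by rw [hYp, hfilt]
      have hsupYb : ((3*j + (Multiset.card lam.parts : ℤ) - 1).toNat ::ₘ
            (lam.parts.filter (fun x => 1 < x)).map (· - 1)).sup
          = (3*j + (Multiset.card lam.parts : ℤ) - 1).toNat := by
        rw [Multiset.sup_cons]
        apply sup_eq_left.mpr
        apply Multiset.sup_le.mpr
        intro b hb
        rcases Multiset.mem_map.mp hb with ⟨y, hy, rfl⟩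
        have hy2 : y ≤ lam.parts.sup := Multiset.le_sup (Multiset.mem_of_mem_filter hy)
        have : (lam.parts.sup : ℤ) ≤ 3*j + (Multiset.card lam.parts : ℤ) := by omega
        omega
      have hcardYb : Multiset.card ((3*j + (Multiset.card lam.parts : ℤ) - 1).toNat ::ₘ
            (lam.parts.filter (fun x => 1 < x)).map (· - 1))
          = 1 + Multiset.card (lam.parts.filter (fun x => 1 < x)) := by
        rw [Multiset.card_cons, Multiset.card_map]; omega
      have hA2 := phi_pos (j-1) (mkP (m n (j-1)) (caseB j lam.parts)) (by
        rw [hYpp, hsupYb, hcardYb]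
        omega)
      rw [hA2]
      apply X_ext (by omega)
      simp only [hYpp]
      -- compute caseA of the new pair
      have herase : (((3*j + (Multiset.card lam.parts : ℤ) - 1).toNat ::ₘ
            (lam.parts.filter (fun x => 1 < x)).map (· - 1)).erase
            (((3*j + (Multiset.card lam.parts : ℤ) - 1).toNat ::ₘ
            (lam.parts.filter (fun x => 1 < x)).map (· - 1)).sup))
          = (lam.parts.filter (fun x => 1 < x)).map (· - 1) := by
        rw [hsupYb, Multiset.erase_cons_head]
      have hmapinc : ((lam.parts.filter (fun x => 1 < x)).map (· - 1)).map (· + 1)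
          = lam.parts.filter (fun x => 1 < x) := by
        rw [Multiset.map_map]
        have : ∀ x ∈ lam.parts.filter (fun x => 1 < x), ((· + 1) ∘ (· - 1)) x = id x := by
          intro x hx
          have := Multiset.of_mem_filter hx
          simp only [Function.comp, id]
          omega
        rw [Multiset.map_congr rfl this, Multiset.map_id]
      have hmj : m n (j-1+1) = lam.parts.sum := by
        have : (m n (j-1+1) : ℤ) = (lam.parts.sum : ℤ) := by
          rw [show j-1+1 = j by omega, m_cast hg]; omega
        omega
      have hcA2 : caseA n (j-1) ((3*j + (Multiset.card lam.parts : ℤ) - 1).toNat ::ₘ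
            (lam.parts.filter (fun x => 1 < x)).map (· - 1))
          = lam.parts.filter (fun x => 1 < x) +
            Multiset.replicate (Multiset.card (lam.parts.filter (fun x => ¬ 1 < x))) 1 := by
        rw [caseA, herase, hmapinc]
        congr 2
        rw [hmj]
        omega
      have hcA2sum : (caseA n (j-1) ((3*j + (Multiset.card lam.parts : ℤ) - 1).toNat ::ₘ
            (lam.parts.filter (fun x => 1 < x)).map (· - 1))).sum = m n (j-1+1) := by
        rw [hcA2, Multiset.sum_add, Multiset.sum_replicate, smul_eq_mul, mul_one, hmj]
        omega
      rw [mkP_parts hcA2sum (by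
        rw [hcA2]
        intro x hx
        rw [Multiset.mem_add] at hx
        rcases hx with hx | hx
        · have := Multiset.of_mem_filter hx; omega
        · rw [Multiset.eq_of_mem_replicate hx]; omega), hcA2]
      rw [← hones, hsplit]

section Counting

variable (n : ℕ)

/-- the index window. -/
noncomputable def win : Finset ℤ := Finset.Icc (-(n:ℤ)) n

lemma card_even_odd (hn : 1 ≤ n) :
    (((win n).filter (fun j => Even j ∧ g j ≤ (n:ℤ))).sigma
      (fun j => (Finset.univ : Finset (Nat.Partition (m n j))))).card =
    (((win n).filter (fun j => ¬ Even j ∧ g j ≤ (n:ℤ))).sigma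
      (fun j => (Finset.univ : Finset (Nat.Partition (m n j))))).card := by
  have hmem : ∀ (P : ℤ → Prop) [DecidablePred P] (x : X n),
      x ∈ ((win n).filter (fun j => P j ∧ g j ≤ (n:ℤ))).sigma
        (fun j => (Finset.univ : Finset (Nat.Partition (m n j)))) ↔
      (P x.1 ∧ g x.1 ≤ (n:ℤ)) := by
    intro P _ x
    rw [Finset.mem_sigma, Finset.mem_filter]
    constructor
    · rintro ⟨⟨_, h2⟩, _⟩; exact h2
    · intro h
      refine ⟨⟨?_, h⟩, Finset.mem_univ _⟩
      rw [win, Finset.mem_Icc]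
      exact g_bound h.2
  have step : ∀ (x : X n), g x.1 ≤ (n:ℤ) →
      g (Phi n x).1 ≤ (n:ℤ) ∧ ((Phi n x).1 = x.1 + 1 ∨ (Phi n x).1 = x.1 - 1) ∧
        Phi n (Phi n x) = x := by
    rintro ⟨j, lam⟩ h
    exact phi_step hn h lam
  apply Finset.card_nbij' (Phi n) (Phi n)
  · intro x hx
    rw [Finset.mem_coe, hmem] at hx ⊢
    obtain ⟨hstep1, hstep2, _⟩ := step x hx.2
    refine ⟨?_, hstep1⟩
    have he := hx.1
    rw [Int.even_iff] at he ⊢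
    omega
  · intro x hx
    rw [Finset.mem_coe, hmem] at hx ⊢
    obtain ⟨hstep1, hstep2, _⟩ := step x hx.2
    refine ⟨?_, hstep1⟩
    have he := hx.1
    rw [Int.even_iff] at he ⊢
    omega
  · intro x hx
    rw [Finset.mem_coe, hmem] at hx
    exact (step x hx.2).2.2
  · intro x hx
    rw [Finset.mem_coe, hmem] at hx
    exact (step x hx.2).2.2

/-- signed weight function. -/
noncomputable def F (n : ℕ) (j : ℤ) : ℤ :=
  if g j ≤ (n:ℤ) then (p (m n j) : ℤ) else 0

lemma sum_F_filter (P : ℤ → Prop) [DecidablePred P] :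
    ∑ j ∈ (win n).filter P, F n j =
      ((((win n).filter (fun j => P j ∧ g j ≤ (n:ℤ))).sigma
        (fun j => (Finset.univ : Finset (Nat.Partition (m n j))))).card : ℤ) := by
  rw [Finset.card_sigma]
  have h1 : ∑ j ∈ (win n).filter P, F n j
      = ∑ j ∈ (win n).filter P, (if g j ≤ (n:ℤ) then (p (m n j) : ℤ) else 0) :=
    Finset.sum_congr rfl (fun j _ => by rw [F])
  rw [h1, ← Finset.sum_filter, Finset.filter_filter]
  push_cast
  apply Finset.sum_congr rfl
  intro j _
  rw [Finset.card_univ, p, Nat.card_eq_fintype_card]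

lemma core (hn : 1 ≤ n) :
    ∑ j ∈ win n, (if Even j then (1:ℤ) else -1) * F n j = 0 := by
  rw [← Finset.sum_filter_add_sum_filter_not (win n) (fun j => Even j)]
  have hE : ∑ j ∈ (win n).filter (fun j => Even j), (if Even j then (1:ℤ) else -1) * F n j
      = ∑ j ∈ (win n).filter (fun j => Even j), F n j :=
    Finset.sum_congr rfl (fun j hj => by
      rw [if_pos (Finset.mem_filter.mp hj).2, one_mul])
  have hO : ∑ j ∈ (win n).filter (fun j => ¬ Even j), (if Even j then (1:ℤ) else -1) * F n j
      = - ∑ j ∈ (win n).filter (fun j => ¬ Even j), F n j := by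
    rw [← Finset.sum_neg_distrib]
    exact Finset.sum_congr rfl (fun j hj => by
      rw [if_neg (Finset.mem_filter.mp hj).2, neg_one_mul])
  rw [hE, hO, sum_F_filter, sum_F_filter, card_even_odd n hn]
  ring

lemma g_injective : Function.Injective g := by
  intro a b hab
  have h1 := two_mul_g a
  have h2 := two_mul_g b
  have h3 : (a - b) * (3*(a+b) + 1) = 0 := by nlinarith
  rcases mul_eq_zero.mp h3 with h | h
  · omega
  · omega

lemma g_pos {j : ℤ} (hj : j ≠ 0) : 1 ≤ g j := by
  have h1 := two_mul_g j
  have h2 : 1 ≤ j ∨ j ≤ -1 := by omega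
  rcases h2 with h2 | h2
  · nlinarith [sq_nonneg (j-1)]
  · nlinarith [sq_nonneg (j+1)]

end Counting

lemma le3sq (i : ℕ) : i ≤ 3*i^2 := by
  rcases i with _ | c
  · simp
  · have h : 3*(c+1)^2 = 3*c^2 + 6*c + 3 := by ring
    have h2 : 0 ≤ 3*c^2 := Nat.zero_le _
    omega

lemma pent_pp {a b : ℤ} (ha : 0 ≤ a) (hb : 0 ≤ b) (h : 3*a^2+a = 3*b^2+b) : a = b := by
  have h3 : (a-b)*(3*(a+b)+1) = 0 := by linear_combination h
  rcases mul_eq_zero.mp h3 with h4 | h4 <;> omega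

lemma pent_mm {a b : ℤ} (ha : 0 ≤ a) (hb : 0 ≤ b) (h : 3*a^2-a = 3*b^2-b) : a = b := by
  have h3 : (a-b)*(3*(a+b)-1) = 0 := by linear_combination h
  rcases mul_eq_zero.mp h3 with h4 | h4 <;> omega

lemma pent_pm {a b : ℤ} (ha : 0 ≤ a) (hb : 0 ≤ b) (h : 3*a^2+a = 3*b^2-b) : a = 0 ∧ b = 0 := by
  have h3 : (a+b)*(3*(a-b)+1) = 0 := by linear_combination h
  rcases mul_eq_zero.mp h3 with h4 | h4 <;> omega

lemma e_eval_plus {k i : ℕ} (hk : 1 ≤ k) (hi : 2*k = 3*i^2 + i) : e k = (-1)^(i+1) := by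
  have hile : i ≤ 2*k := by
    calc i ≤ 3*i^2 + i := Nat.le_add_left i _
    _ = 2*k := hi.symm
  have hiZ : 2*(k:ℤ) = 3*(i:ℤ)^2 + i := by exact_mod_cast hi
  have hother : ∀ b ∈ Finset.range (2*k+2), b ≠ i →
      (if 2*k = 3*b^2 - b ∨ 2*k = 3*b^2 + b then ((-1:ℤ))^(b+1) else 0) = 0 := by
    intro b hb hbne
    rw [if_neg]
    rintro (hc | hc)
    · have hcZ : 2*(k:ℤ) = 3*(b:ℤ)^2 - b := by
        zify [le3sq b] at hc; exact hc
      have := pent_pm (Int.natCast_nonneg i) (Int.natCast_nonneg b) (by linarith)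
      have hi0 : (i:ℤ) = 0 := this.1
      simp only [Nat.cast_eq_zero] at hi0
      omega
    · have hcZ : 2*(k:ℤ) = 3*(b:ℤ)^2 + b := by exact_mod_cast hc
      have := pent_pp (Int.natCast_nonneg b) (Int.natCast_nonneg i) (by linarith)
      have : b = i := by exact_mod_cast this
      exact hbne this
  rw [e, Finset.sum_eq_single_of_mem i (Finset.mem_range.mpr (by omega)) hother,
    if_pos (Or.inr hi)]

lemma e_eval_minus {k i : ℕ} (hk : 1 ≤ k) (hi : 2*k = 3*i^2 - i) : e k = (-1)^(i+1) := by
  have hiZ : 2*(k:ℤ) = 3*(i:ℤ)^2 - i := by zify [le3sq i] at hi; exact hi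
  have hi1 : 1 ≤ i := by
    by_contra h
    have : i = 0 := by omega
    subst this
    simp at hiZ
    omega
  have hile : (i:ℤ) ≤ 2*k := by nlinarith [hiZ, sq_nonneg ((i:ℤ) - 1)]
  have hile' : i ≤ 2*k := by exact_mod_cast hile
  have hother : ∀ b ∈ Finset.range (2*k+2), b ≠ i →
      (if 2*k = 3*b^2 - b ∨ 2*k = 3*b^2 + b then ((-1:ℤ))^(b+1) else 0) = 0 := by
    intro b hb hbne
    rw [if_neg]
    rintro (hc | hc)
    · have hcZ : 2*(k:ℤ) = 3*(b:ℤ)^2 - b := by zify [le3sq b] at hc; exact hc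
      have := pent_mm (Int.natCast_nonneg b) (Int.natCast_nonneg i) (by linarith)
      have : b = i := by exact_mod_cast this
      exact hbne this
    · have hcZ : 2*(k:ℤ) = 3*(b:ℤ)^2 + b := by exact_mod_cast hc
      have := pent_pm (Int.natCast_nonneg b) (Int.natCast_nonneg i) (by linarith)
      have hi0 : (i:ℤ) = 0 := this.2
      simp only [Nat.cast_eq_zero] at hi0
      omega
  rw [e, Finset.sum_eq_single_of_mem i (Finset.mem_range.mpr (by omega)) hother,
    if_pos (Or.inl hi)]

lemma e_eval_zero {k : ℕ}
    (h : ∀ i : ℕ, ¬(2*k = 3*i^2 - i ∨ 2*k = 3*i^2 + i)) : e k = 0 := by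
  rw [e]
  exact Finset.sum_eq_zero (fun b _ => if_neg (h b))

lemma sign_eq {i : ℕ} : (if Even (i:ℤ) then (-1:ℤ) else 1) = (-1)^(i+1) := by
  by_cases h : Even i
  · rw [if_pos (by exact_mod_cast h), Odd.neg_one_pow (Even.add_one h)]
  · rw [if_neg (by exact_mod_cast h), Even.neg_one_pow (Odd.add_one (Nat.odd_iff.mpr (by
      rw [Nat.even_iff] at h; omega)))]

lemma e_as_sum {n : ℕ} (hn : 1 ≤ n) {k : ℕ} (hk1 : 1 ≤ k) (hkn : k ≤ n) :
    e k = ∑ j ∈ (win n).erase 0,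
      (if g j = (k:ℤ) then (if Even j then (-1:ℤ) else 1) else 0) := by
  by_cases hex : ∃ j : ℤ, j ≠ 0 ∧ g j = (k:ℤ)
  · obtain ⟨j0, hj0, hgj0⟩ := hex
    have hgb := g_bound (n := n) (by omega : g j0 ≤ (n:ℤ))
    have hj0mem : j0 ∈ (win n).erase 0 := by
      rw [Finset.mem_erase, win, Finset.mem_Icc]
      exact ⟨hj0, hgb⟩
    have hother : ∀ b ∈ (win n).erase 0, b ≠ j0 →
        (if g b = (k:ℤ) then (if Even b then (-1:ℤ) else 1) else 0) = 0 := by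
      intro b _ hbne
      rw [if_neg]
      intro hgb'
      exact hbne (g_injective (hgb'.trans hgj0.symm))
    rw [Finset.sum_eq_single_of_mem j0 hj0mem hother, if_pos hgj0]
    have h2g := two_mul_g j0
    rcases lt_trichotomy j0 0 with hlt | heq | hgt
    · set i : ℕ := (-j0).toNat with hidef
      have hij : (i:ℤ) = -j0 := by omega
      have hiZ : 2*(k:ℤ) = 3*(i:ℤ)^2 - i := by
        have hsq : ((i:ℤ))^2 = j0^2 := by rw [hij]; ring
        rw [hsq, hij]
        linarith [hgj0, h2g]
      have hiN : 2*k = 3*i^2 - i := by zify [le3sq i]; exact hiZ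
      rw [e_eval_minus hk1 hiN, ← sign_eq]
      have : Even j0 ↔ Even (i:ℤ) := by rw [hij, even_neg]
      by_cases he : Even j0
      · rw [if_pos he, if_pos (this.mp he)]
      · rw [if_neg he, if_neg (fun hc => he (this.mpr hc))]
    · exact absurd heq hj0
    · set i : ℕ := j0.toNat with hidef
      have hij : (i:ℤ) = j0 := by omega
      have hiZ : 2*(k:ℤ) = 3*(i:ℤ)^2 + i := by
        have hsq : ((i:ℤ))^2 = j0^2 := by rw [hij]
        rw [hsq, hij]
        linarith [hgj0, h2g]
      have hiN : 2*k = 3*i^2 + i := by exact_mod_cast hiZ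
      rw [e_eval_plus hk1 hiN, ← sign_eq]
      rw [hij]
  · rw [e_eval_zero, eq_comm]
    · apply Finset.sum_eq_zero
      intro j hj
      rw [Finset.mem_erase] at hj
      rw [if_neg]
      intro hc
      exact hex ⟨j, hj.1, hc⟩
    · intro i
      rintro (hc | hc)
      · -- witness j = -i
        have hi1 : i ≠ 0 := by rintro rfl; simp at hc; omega
        have hcZ : 2*(k:ℤ) = 3*(i:ℤ)^2 - i := by zify [le3sq i] at hc; exact hc
        have h2g := two_mul_g (-(i:ℤ))
        have hsq : (-(i:ℤ))^2 = (i:ℤ)^2 := by ring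
        rw [hsq] at h2g
        apply hex
        refine ⟨-(i:ℤ), by simpa using hi1, ?_⟩
        linarith
      · have hi1 : i ≠ 0 := by rintro rfl; simp at hc; omega
        have hcZ : 2*(k:ℤ) = 3*(i:ℤ)^2 + i := by exact_mod_cast hc
        have h2g := two_mul_g (i:ℤ)
        apply hex
        refine ⟨(i:ℤ), by simpa using hi1, ?_⟩
        linarith

theorem euler_pentagonal_recurrence' (n : ℕ) (hn : 1 ≤ n) :
    (p n : ℤ) = ∑ k ∈ Finset.Icc 1 n, e k * p (n - k) := by
  have hcore := core n hn
  have h0mem : (0:ℤ) ∈ win n := by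
    rw [win, Finset.mem_Icc]
    omega
  rw [← Finset.add_sum_erase _ _ h0mem] at hcore
  have hF0 : F n 0 = (p n : ℤ) := by
    have hm0 : m n 0 = n := by simp only [m, g_zero]; omega
    rw [F, if_pos (by rw [g_zero]; simp), hm0]
  rw [if_pos (Even.zero), one_mul, hF0] at hcore
  have key : ∑ k ∈ Finset.Icc 1 n, e k * (p (n - k) : ℤ)
      = ∑ j ∈ (win n).erase 0, (-(if Even j then (1:ℤ) else -1)) * F n j := by
    have step1 : ∑ k ∈ Finset.Icc 1 n, e k * (p (n - k) : ℤ)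
        = ∑ k ∈ Finset.Icc 1 n, ∑ j ∈ (win n).erase 0,
          (if g j = (k:ℤ) then (if Even j then (-1:ℤ) else 1) * (p (n - k) : ℤ) else 0) := by
      apply Finset.sum_congr rfl
      intro k hk
      rw [Finset.mem_Icc] at hk
      rw [e_as_sum hn hk.1 hk.2, Finset.sum_mul]
      apply Finset.sum_congr rfl
      intro j _
      rw [ite_mul, zero_mul]
    rw [step1, Finset.sum_comm]
    apply Finset.sum_congr rfl
    intro j hj
    rw [Finset.mem_erase, win, Finset.mem_Icc] at hj
    by_cases hgn : g j ≤ (n:ℤ)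
    · have hg1 : 1 ≤ g j := g_pos hj.1
      have hk0 : ((g j).toNat : ℤ) = g j := by omega
      have hk0mem : (g j).toNat ∈ Finset.Icc 1 n := by
        rw [Finset.mem_Icc]; omega
      have hother : ∀ b ∈ Finset.Icc 1 n, b ≠ (g j).toNat →
          (if g j = (b:ℤ) then (if Even j then (-1:ℤ) else 1) * (p (n - b) : ℤ) else 0) = 0 := by
        intro b _ hbne
        rw [if_neg]
        intro hc
        apply hbne
        omega
      rw [Finset.sum_eq_single_of_mem (g j).toNat hk0mem hother]
      rw [if_pos hk0.symm, F, if_pos hgn]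
      have hmm : m n j = n - (g j).toNat := by simp only [m]; omega
      rw [hmm]
      by_cases he : Even j <;> simp [he]
    · have hzero : ∀ b ∈ Finset.Icc 1 n,
          (if g j = (b:ℤ) then (if Even j then (-1:ℤ) else 1) * (p (n - b) : ℤ) else 0) = 0 := by
        intro b hb
        rw [Finset.mem_Icc] at hb
        rw [if_neg]
        intro hc
        have : (b:ℤ) ≤ (n:ℤ) := by exact_mod_cast hb.2
        omega
      rw [Finset.sum_eq_zero hzero, F, if_neg hgn, mul_zero]
  rw [key]
  have h2 : ∑ j ∈ (win n).erase 0, (-(if Even j then (1:ℤ) else -1)) * F n j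
      = - ∑ j ∈ (win n).erase 0, (if Even j then (1:ℤ) else -1) * F n j := by
    rw [← Finset.sum_neg_distrib]
    exact Finset.sum_congr rfl (fun j _ => by rw [neg_mul])
  rw [h2]
  linarith

end EulerPent

theorem euler_pentagonal_recurrence (n : ℕ) (hn : 1 ≤ n) :
    (p n : ℤ) = ∑ k ∈ Finset.Icc 1 n, e k * p (n - k) :=
  EulerPent.euler_pentagonal_recurrence' n hn
end

section
/- For all natural numbers k and n with 1 ≤ k < n, p_min_k(n) = Σ_{i=k}^{n−k} p_min_i(n−k). -/
/-- The number of partitions of `n` whose smallest part equals `k`. -/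
noncomputable def pmin (k n : ℕ) : ℕ :=
  Nat.card {P : Nat.Partition n // k ∈ P.parts ∧ ∀ x ∈ P.parts, k ≤ x}

open Finset in
theorem pmin_sum (k n : ℕ) (hk : 1 ≤ k) (hkn : k < n) :
    pmin k n = ∑ i ∈ Finset.Icc k (n - k), pmin i (n - k) := by
  classical
  set m := n - k with hm
  have hm1 : 1 ≤ m := by omega
  have hn : n = k + m := by omega
  -- Step 1: bijection erase/cons
  have e : {P : Nat.Partition n // k ∈ P.parts ∧ ∀ x ∈ P.parts, k ≤ x} ≃
      {Q : Nat.Partition m // ∀ x ∈ Q.parts, k ≤ x} :=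
    { toFun := fun P =>
        ⟨⟨P.1.parts.erase k,
          fun hi => P.1.parts_pos (Multiset.mem_of_mem_erase hi),
          by
            have h := Multiset.cons_erase P.2.1
            have := P.1.parts_sum
            have hsum : (k ::ₘ P.1.parts.erase k).sum = n := by rw [h, this]
            rw [Multiset.sum_cons] at hsum
            omega⟩,
          fun x hx => P.2.2 x (Multiset.mem_of_mem_erase hx)⟩
      invFun := fun Q =>
        ⟨⟨k ::ₘ Q.1.parts,
          fun hi => by
            rcases Multiset.mem_cons.mp hi with h | h
            · omega
            · exact Q.1.parts_pos h,
          by rw [Multiset.sum_cons, Q.1.parts_sum]; omega⟩,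
          Multiset.mem_cons_self k _,
          fun x hx => by
            rcases Multiset.mem_cons.mp hx with h | h
            · omega
            · exact Q.2 x h⟩
      left_inv := fun P => by
        apply Subtype.ext
        apply Nat.Partition.ext
        exact Multiset.cons_erase P.2.1
      right_inv := fun Q => by
        apply Subtype.ext
        apply Nat.Partition.ext
        exact Multiset.erase_cons_head k _ }
  have h1 : pmin k n = Nat.card {Q : Nat.Partition m // ∀ x ∈ Q.parts, k ≤ x} :=
    Nat.card_congr e
  rw [h1]
  -- Step 2: decompose by minimal part
  have hcard : ∀ (p : Nat.Partition m → Prop) [DecidablePred p],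
      Nat.card {Q : Nat.Partition m // p Q} = (Finset.univ.filter p).card := by
    intro p _
    rw [Nat.card_eq_fintype_card, Fintype.card_subtype]
  rw [hcard]
  have hpm : ∀ i, pmin i m =
      (Finset.univ.filter (fun Q : Nat.Partition m => i ∈ Q.parts ∧ ∀ x ∈ Q.parts, i ≤ x)).card :=
    fun i => hcard _
  simp_rw [hpm]
  rw [← Finset.card_biUnion]
  · congr 1
    ext Q
    simp only [Finset.mem_filter, Finset.mem_biUnion, Finset.mem_univ, true_and, Finset.mem_Icc]
    constructor
    · intro h
      have hne : Q.parts.toFinset.Nonempty := by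
        rw [Multiset.toFinset_nonempty]
        intro h0
        have := Q.parts_sum
        rw [h0] at this
        simp at this
        omega
      set i := Q.parts.toFinset.min' hne with hi
      have himem : i ∈ Q.parts := Multiset.mem_toFinset.mp (Q.parts.toFinset.min'_mem hne)
      have hmin : ∀ x ∈ Q.parts, i ≤ x := fun x hx =>
        Finset.min'_le _ x (Multiset.mem_toFinset.mpr hx)
      refine ⟨i, ⟨h i himem, ?_⟩, himem, hmin⟩
      calc i ≤ Q.parts.sum := Multiset.single_le_sum (fun x _ => Nat.zero_le x) i himem
      _ = m := Q.parts_sum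
    · rintro ⟨i, ⟨hki, _⟩, _, hmin⟩ x hx
      exact le_trans hki (hmin x hx)
  · intro i _ j _ hij
    simp only [Finset.disjoint_left, Finset.mem_filter]
    rintro Q ⟨_, hiQ, hi⟩ ⟨_, hjQ, hj⟩
    exact hij (le_antisymm (hi j hjQ) (hj i hiQ))
end
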